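/- arXiv:2307.00447 — 11 statements merged into one kernel-verified Lean document; each statement's English description precedes it below -/
import Mathlib

section
/- det M = (−1)^n. (In particular M is unimodular, so it is invertible over ℚ.) This is the determinant of the linking matrix computed in Section 6 of the paper. -/
open Matrix

/-- The linking matrix `M` from Section 6 of the paper: an `n x n` matrix over `Q`
(indices `0, ..., n-1` here correspond to the paper's `1, ..., n`) with diagonal entries `-2`
except the last one which is `-1`, entries `-1` on the super- and sub-diagonal,
extra entries `-1` at positions `(1,3)` and `(3,1)` (paper indexing), and zeros elsewhere. -/
def linkM (n : ℕ) : Matrix (Fin n) (Fin n) ℚ :=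
  Matrix.of fun i j =>
    if i = j then (if (i : ℕ) = n - 1 then -1 else -2)
    else if (i : ℕ) + 1 = (j : ℕ) ∨ (j : ℕ) + 1 = (i : ℕ) then -1
    else if ((i : ℕ) = 0 ∧ (j : ℕ) = 2) ∨ ((i : ℕ) = 2 ∧ (j : ℕ) = 0) then -1
    else 0

/-- The tridiagonal-with-extras matrix with all-`-2` diagonal. -/
def triB (k : ℕ) : Matrix (Fin k) (Fin k) ℚ :=
  Matrix.of fun i j =>
    if i = j then -2
    else if (i : ℕ) + 1 = (j : ℕ) ∨ (j : ℕ) + 1 = (i : ℕ) then -1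
    else if ((i : ℕ) = 0 ∧ (j : ℕ) = 2) ∨ ((i : ℕ) = 2 ∧ (j : ℕ) = 0) then -1
    else 0

lemma triB_submatrix {m m' : ℕ} (f g : Fin m → Fin m')
    (hf : ∀ a, ((f a : ℕ)) = a) (hg : ∀ b, ((g b : ℕ)) = b) :
    (triB m').submatrix f g = triB m := by
  ext a b
  simp only [triB, Matrix.submatrix_apply, Matrix.of_apply, Fin.ext_iff, hf, hg]

lemma linkM_submatrix {m n : ℕ} (f g : Fin m → Fin n)
    (hf : ∀ a, ((f a : ℕ)) = a) (hg : ∀ b, ((g b : ℕ)) = b)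
    (hf2 : ∀ a : Fin m, (a : ℕ) < n - 1) :
    (linkM n).submatrix f g = triB m := by
  ext a b
  have := hf2 a
  simp only [linkM, triB, Matrix.submatrix_apply, Matrix.of_apply, Fin.ext_iff, hf, hg]
  split_ifs <;> first | rfl | (exfalso; omega) | (exfalso; simp_all) | (exfalso; simp_all; omega)

/-- Expansion when the last column has only its last entry possibly nonzero. -/
lemma helperA {m : ℕ} (M : Matrix (Fin (m + 1)) (Fin (m + 1)) ℚ)
    (h0 : ∀ i : Fin (m + 1), (i : ℕ) < m → M i (Fin.last m) = 0) :
    M.det = M (Fin.last m) (Fin.last m) * (M.submatrix Fin.castSucc Fin.castSucc).det := by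
  rw [Matrix.det_succ_column M (Fin.last m)]
  rw [Finset.sum_eq_single (Fin.last m)]
  · simp only [Fin.val_last, Fin.succAbove_last]
    rw [show ((-1 : ℚ)) ^ (m + m) = 1 from Even.neg_one_pow ⟨m, by ring⟩]
    ring
  · intro i _ hi
    have hlt : (i : ℕ) < m := by
      have h1 := i.isLt
      have h2 : (i : ℕ) ≠ m := fun h => hi (Fin.ext (by simp [h]))
      omega
    rw [h0 i hlt]; ring
  · intro h; exact absurd (Finset.mem_univ _) h

/-- Expansion when the last row has only its last two entries possibly nonzero. -/
lemma helperB {m : ℕ} (M : Matrix (Fin (m + 2)) (Fin (m + 2)) ℚ)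
    (h0 : ∀ j : Fin (m + 2), (j : ℕ) < m → M (Fin.last (m + 1)) j = 0) :
    M.det = M (Fin.last (m + 1)) (Fin.last (m + 1)) *
        (M.submatrix Fin.castSucc Fin.castSucc).det
      - M (Fin.last (m + 1)) (Fin.castSucc (Fin.last m)) *
        (M.submatrix Fin.castSucc ((Fin.castSucc (Fin.last m)).succAbove)).det := by
  rw [Matrix.det_succ_row M (Fin.last (m + 1))]
  rw [Fin.sum_univ_castSucc, Fin.sum_univ_castSucc]
  have hz : ∀ j : Fin m, M (Fin.last (m + 1)) (Fin.castSucc (Fin.castSucc j)) = 0 :=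
    fun j => h0 _ (by simp [j.isLt])
  simp only [hz, mul_zero, zero_mul, Finset.sum_const_zero, zero_add,
    Fin.val_last, Fin.coe_castSucc, Fin.succAbove_last]
  rw [show ((-1 : ℚ)) ^ (m + 1 + (m + 1)) = 1 from Even.neg_one_pow ⟨m + 1, by ring⟩,
    show ((-1 : ℚ)) ^ (m + 1 + m) = -1 from Odd.neg_one_pow ⟨m, by ring⟩]
  ring

lemma last_col_succAbove {k : ℕ} :
    (Fin.castSucc (Fin.last k)).succAbove (Fin.last k) = Fin.last (k + 1) := by
  rw [Fin.succAbove_castSucc_self, Fin.succ_last]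

lemma mid_succAbove {k : ℕ} (b : Fin k) :
    (Fin.castSucc (Fin.last k)).succAbove (Fin.castSucc b) =
      Fin.castSucc (Fin.castSucc b) := by
  apply Fin.succAbove_of_castSucc_lt
  rw [Fin.castSucc_lt_castSucc_iff]
  exact Fin.castSucc_lt_last b

lemma triB_rec (k : ℕ) (hk : 2 ≤ k) :
    (triB (k + 2)).det = -2 * (triB (k + 1)).det - (triB k).det := by
  rw [helperB (triB (k + 2)) ?_]
  · have hdiag : triB (k + 2) (Fin.last (k + 1)) (Fin.last (k + 1)) = -2 := by
      simp [triB]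
    have hoff : triB (k + 2) (Fin.last (k + 1)) (Fin.castSucc (Fin.last k)) = -1 := by
      simp only [triB, Matrix.of_apply, Fin.ext_iff, Fin.val_last, Fin.coe_castSucc]
      split_ifs <;> first | rfl | (exfalso; omega) | (exfalso; simp_all) | (exfalso; simp_all; omega)
    rw [hdiag, hoff]
    rw [triB_submatrix (Fin.castSucc : Fin (k + 1) → Fin (k + 2)) Fin.castSucc
      (fun a => rfl) (fun b => rfl)]
    have hminor : ((triB (k + 2)).submatrix Fin.castSucc
        ((Fin.castSucc (Fin.last k)).succAbove)).det = - (triB k).det := by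
      rw [helperA _ ?_]
      · rw [Matrix.submatrix_apply, last_col_succAbove, Matrix.submatrix_submatrix]
        rw [triB_submatrix
            ((Fin.castSucc ∘ Fin.castSucc) : Fin k → Fin (k + 2))
            ((Fin.castSucc (Fin.last k)).succAbove ∘ Fin.castSucc)
            (fun a => rfl) (fun b => by simp [Function.comp, mid_succAbove b])]
        have hcorner : triB (k + 2) (Fin.castSucc (Fin.last k)) (Fin.last (k + 1)) = -1 := by
          simp only [triB, Matrix.of_apply, Fin.ext_iff, Fin.coe_castSucc, Fin.val_last]
          split_ifs <;> first | rfl | (exfalso; omega) | (exfalso; simp_all) | (exfalso; simp_all; omega)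
        rw [hcorner]; ring
      · intro i hi
        rw [Matrix.submatrix_apply, last_col_succAbove]
        simp only [triB, Matrix.of_apply, Fin.ext_iff, Fin.coe_castSucc, Fin.val_last]
        split_ifs <;> first | rfl | (exfalso; omega) | (exfalso; simp_all) | (exfalso; simp_all; omega)
    rw [hminor]; ring
  · intro j hj
    simp only [triB, Matrix.of_apply, Fin.ext_iff, Fin.val_last]
    split_ifs <;> first | rfl | (exfalso; omega) | (exfalso; simp_all) | (exfalso; simp_all; omega)

lemma triB_two : (triB 2).det = 3 := by
  rw [Matrix.det_fin_two]
  norm_num [show triB 2 0 0 = -2 from rfl, show triB 2 0 1 = -1 from rfl,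
    show triB 2 1 0 = -1 from rfl, show triB 2 1 1 = -2 from rfl]

lemma triB_three : (triB 3).det = -4 := by
  rw [Matrix.det_fin_three]
  norm_num [show triB 3 0 0 = -2 from rfl, show triB 3 0 1 = -1 from rfl,
    show triB 3 0 2 = -1 from rfl, show triB 3 1 0 = -1 from rfl,
    show triB 3 1 1 = -2 from rfl, show triB 3 1 2 = -1 from rfl,
    show triB 3 2 0 = -1 from rfl, show triB 3 2 1 = -1 from rfl,
    show triB 3 2 2 = -2 from rfl]

lemma triB_det : ∀ m : ℕ, (triB (m + 2)).det = (-1 : ℚ) ^ (m + 2) * (m + 3) ∧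
    (triB (m + 3)).det = (-1 : ℚ) ^ (m + 3) * (m + 4) := by
  intro m
  induction m with
  | zero =>
    refine ⟨by rw [triB_two]; norm_num, by rw [triB_three]; norm_num⟩
  | succ p ih =>
    constructor
    · show (triB (p + 3)).det = _
      rw [ih.2]
      push_cast; ring
    · show (triB (p + 2 + 2)).det = _
      rw [triB_rec (p + 2) (by omega)]
      have h1 : (triB (p + 2 + 1)).det = (-1 : ℚ) ^ (p + 3) * (p + 4) := ih.2
      have h2 : (triB (p + 2)).det = (-1 : ℚ) ^ (p + 2) * (p + 3) := ih.1
      rw [h1, h2]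
      push_cast; ring

/-- `det M = (-1)^n`; in particular `M` is unimodular, hence invertible over `ℚ`. -/
theorem stmt_0 (n : ℕ) (hn : 4 ≤ n) :
    (linkM n).det = (-1 : ℚ) ^ n := by
  obtain ⟨m, rfl⟩ : ∃ m, n = m + 4 := ⟨n - 4, by omega⟩
  rw [show m + 4 = (m + 2) + 2 from rfl]
  rw [helperB (linkM (m + 2 + 2)) ?_]
  · have hdiag : linkM (m + 2 + 2) (Fin.last (m + 2 + 1)) (Fin.last (m + 2 + 1)) = -1 := by
      simp only [linkM, Matrix.of_apply, Fin.ext_iff, Fin.val_last]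
      split_ifs <;> first | rfl | (exfalso; omega) | (exfalso; simp_all) | (exfalso; simp_all; omega)
    have hoff : linkM (m + 2 + 2) (Fin.last (m + 2 + 1))
        (Fin.castSucc (Fin.last (m + 2))) = -1 := by
      simp only [linkM, Matrix.of_apply, Fin.ext_iff, Fin.val_last, Fin.coe_castSucc]
      split_ifs <;> first | rfl | (exfalso; omega) | (exfalso; simp_all) | (exfalso; simp_all; omega)
    rw [hdiag, hoff]
    rw [linkM_submatrix (Fin.castSucc : Fin (m + 2 + 1) → Fin (m + 2 + 2)) Fin.castSucc
      (fun a => rfl) (fun b => rfl) (fun a => by have := a.isLt; omega)]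
    have hminor : ((linkM (m + 2 + 2)).submatrix Fin.castSucc
        ((Fin.castSucc (Fin.last (m + 2))).succAbove)).det = - (triB (m + 2)).det := by
      rw [helperA _ ?_]
      · rw [Matrix.submatrix_apply, last_col_succAbove, Matrix.submatrix_submatrix]
        rw [linkM_submatrix
            ((Fin.castSucc ∘ Fin.castSucc) : Fin (m + 2) → Fin (m + 2 + 2))
            ((Fin.castSucc (Fin.last (m + 2))).succAbove ∘ Fin.castSucc)
            (fun a => rfl) (fun b => by simp [Function.comp, mid_succAbove b])
            (fun a => by have := a.isLt; omega)]
        have hcorner : linkM (m + 2 + 2) (Fin.castSucc (Fin.last (m + 2)))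
            (Fin.last (m + 2 + 1)) = -1 := by
          simp only [linkM, Matrix.of_apply, Fin.ext_iff, Fin.coe_castSucc, Fin.val_last]
          split_ifs <;> first | rfl | (exfalso; omega) | (exfalso; simp_all) | (exfalso; simp_all; omega)
        rw [hcorner]; ring
      · intro i hi
        rw [Matrix.submatrix_apply, last_col_succAbove]
        simp only [linkM, Matrix.of_apply, Fin.ext_iff, Fin.coe_castSucc, Fin.val_last]
        split_ifs <;> first | rfl | (exfalso; omega) | (exfalso; simp_all) | (exfalso; simp_all; omega)
    rw [hminor]
    have h1 : (triB (m + 2 + 1)).det = (-1 : ℚ) ^ (m + 3) * (m + 4) := (triB_det m).2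
    have h2 : (triB (m + 2)).det = (-1 : ℚ) ^ (m + 2) * (m + 3) := (triB_det m).1
    rw [h1, h2]
    push_cast; ring
  · intro j hj
    simp only [linkM, Matrix.of_apply, Fin.ext_iff, Fin.val_last]
    split_ifs <;> first | rfl | (exfalso; omega) | (exfalso; simp_all) | (exfalso; simp_all; omega)
end

section
/- M is negative definite: for every nonzero vector x ∈ ℚⁿ one has xᵀ M x < 0 (equivalently, −M is positive definite). Consequently the signature of M is −n = −(t₀ − 1), which is the value σ(X) used in the paper's computation of the d₃-invariant. -/
open Matrix Finset

/-- ℕ-indexed version of the entries of the linking matrix. -/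
def aN (n i j : ℕ) : ℚ :=
  if i = j then (if i = n - 1 then -1 else -2)
  else if i + 1 = j ∨ j + 1 = i then -1
  else if (i = 0 ∧ j = 2) ∨ (i = 2 ∧ j = 0) then -1
  else 0

/-- The quadratic form of the linking matrix, as a sum over `Finset.range`. -/
def qF (n : ℕ) (e : ℕ → ℚ) : ℚ :=
  ∑ i ∈ range n, ∑ j ∈ range n, e i * aN n i j * e j

lemma aN_stable (n i j : ℕ) (hn : 4 ≤ n) (hi : i < n) (hj : j < n)
    (h : ¬(i = n - 1 ∧ j = n - 1)) : aN (n+1) i j = aN n i j := by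
  unfold aN; split_ifs <;> first | rfl | (exfalso; omega)

lemma q_succ (n : ℕ) (hn : 4 ≤ n) (e : ℕ → ℚ) :
    qF (n+1) e = qF n e - (e (n-1) + e n)^2 := by
  have hmem : n - 1 ∈ range n := by simp; omega
  have hlast : ∀ i ∈ range n, e i * aN (n+1) i n * e n = if i = n-1 then -(e (n-1) * e n) else 0 := by
    intro i hi
    simp only [mem_range] at hi
    by_cases h : i = n - 1
    · subst h
      have : aN (n+1) (n-1) n = -1 := by unfold aN; split_ifs <;> first | rfl | (exfalso; omega)
      rw [this, if_pos rfl]; ring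
    · have : aN (n+1) i n = 0 := by unfold aN; split_ifs <;> first | rfl | (exfalso; omega)
      rw [this]; simp [h]
  have hlast' : ∀ j ∈ range n, e n * aN (n+1) n j * e j = if j = n-1 then -(e (n-1) * e n) else 0 := by
    intro j hj
    simp only [mem_range] at hj
    by_cases h : j = n - 1
    · subst h
      have : aN (n+1) n (n-1) = -1 := by unfold aN; split_ifs <;> first | rfl | (exfalso; omega)
      rw [this, if_pos rfl]; ring
    · have : aN (n+1) n j = 0 := by unfold aN; split_ifs <;> first | rfl | (exfalso; omega)
      rw [this]; simp [h]
  have hdiag : aN (n+1) n n = -1 := by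
    unfold aN; split_ifs <;> first | rfl | (exfalso; omega)
  have hinner : ∀ i ∈ range n, (∑ j ∈ range n, e i * aN (n+1) i j * e j)
      = (∑ j ∈ range n, e i * aN n i j * e j) - (if i = n-1 then (e (n-1))^2 else 0) := by
    intro i hi
    by_cases h : i = n - 1
    · subst h
      have : ∀ j ∈ range n, e (n-1) * aN (n+1) (n-1) j * e j
          = e (n-1) * aN n (n-1) j * e j - (if j = n-1 then (e (n-1))^2 else 0) := by
        intro j hj
        by_cases hj' : j = n - 1
        · subst hj'
          have h1 : aN (n+1) (n-1) (n-1) = -2 := by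
            unfold aN; split_ifs <;> first | rfl | (exfalso; omega)
          have h2 : aN n (n-1) (n-1) = -1 := by
            unfold aN; split_ifs <;> first | rfl | (exfalso; omega)
          rw [h1, h2, if_pos rfl]; ring
        · simp only [mem_range] at hj
          rw [aN_stable n _ _ hn (by omega) hj (by tauto)]; simp [hj']
      rw [Finset.sum_congr rfl this, Finset.sum_sub_distrib, Finset.sum_ite_eq' (range n)]
      simp [hmem]
    · have : ∀ j ∈ range n, e i * aN (n+1) i j * e j = e i * aN n i j * e j := by
        intro j hj
        simp only [mem_range] at hi hj
        rw [aN_stable n _ _ hn hi hj (by tauto)]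
      rw [Finset.sum_congr rfl this]; simp [h]
  unfold qF
  rw [Finset.sum_range_succ]
  rw [Finset.sum_congr rfl (fun i hi => Finset.sum_range_succ (fun j => e i * aN (n+1) i j * e j) n)]
  rw [Finset.sum_add_distrib]
  rw [Finset.sum_congr rfl hinner, Finset.sum_sub_distrib,
    Finset.sum_ite_eq' (range n), Finset.sum_congr rfl hlast,
    Finset.sum_ite_eq' (range n), Finset.sum_range_succ (fun j => e n * aN (n+1) n j * e j) n,
    Finset.sum_congr rfl hlast', Finset.sum_ite_eq' (range n), hdiag]
  simp only [hmem, if_pos]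
  ring

lemma qF_key : ∀ n : ℕ, 4 ≤ n → ∀ e : ℕ → ℚ,
    (n : ℚ) * qF n e ≤ -(e (n-1))^2 ∧
    ((e (n-1) = 0 ∧ ∃ i < n, e i ≠ 0) → qF n e < 0) := by
  intro n hn
  induction n, hn using Nat.le_induction with
  | base =>
    intro e
    have hq : qF 4 e = -2*(e 0)^2 - 2*(e 1)^2 - 2*(e 2)^2 - (e 3)^2
        - 2*(e 0 * e 1) - 2*(e 1 * e 2) - 2*(e 2 * e 3) - 2*(e 0 * e 2) := by
      unfold qF aN
      simp [Finset.sum_range_succ]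
      ring
    constructor
    · rw [hq]
      norm_num
      nlinarith [sq_nonneg (2*e 0 + e 1 + e 2), sq_nonneg (3*e 1 + e 2), sq_nonneg (4*e 2 + 3*e 3)]
    · rintro ⟨h3, i, hi, hne⟩
      norm_num at h3
      interval_cases i <;>
      · rw [hq, h3]
        have := sq_pos_of_ne_zero hne
        nlinarith [sq_nonneg (e 0 + e 1), sq_nonneg (e 1 + e 2), sq_nonneg (e 0 + e 2),
          sq_nonneg (e 0 + 2*e 1 + e 2), sq_nonneg (e 0 + e 1 + 2*e 2),
          sq_nonneg (2*e 0 + e 1 + e 2)]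
  | succ n hn ih =>
    intro e
    have hrec := q_succ n hn e
    obtain ⟨h1, h2⟩ := ih e
    have hc : (4:ℚ) ≤ (n:ℚ) := by exact_mod_cast hn
    have hc0 : (0:ℚ) < (n:ℚ) := by linarith
    have hidx : n + 1 - 1 = n := by omega
    rw [hidx]
    set a := e (n-1)
    set b := e n
    constructor
    · rw [hrec]
      push_cast
      nlinarith [sq_nonneg (((n:ℚ)+1)*a + (n:ℚ)*b),
        mul_le_mul_of_nonneg_left h1 (by linarith : (0:ℚ) ≤ (n:ℚ)+1), sq_nonneg (a+b)]
    · rintro ⟨hb, i, hi, hne⟩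
      have hiltn : i < n := by
        rcases Nat.lt_succ_iff_lt_or_eq.mp hi with h | h
        · exact h
        · exact absurd (h ▸ hne) (by simp [b] at hb; simp [h, hb])
      have hqn : qF n e < 0 := by
        by_cases ha : a = 0
        · exact h2 ⟨ha, i, hiltn, hne⟩
        · have := sq_pos_of_ne_zero ha
          nlinarith
      rw [hrec, hb]
      nlinarith [sq_nonneg a]

lemma linkM_eq (n : ℕ) (i j : Fin n) : linkM n i j = aN n i j := by
  unfold linkM aN
  simp only [Matrix.of_apply, Fin.ext_iff]

lemma bridge (n : ℕ) (x : Fin n → ℚ) :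
    x ⬝ᵥ (linkM n).mulVec x = qF n (fun k => if h : k < n then x ⟨k, h⟩ else 0) := by
  unfold qF
  simp only [dotProduct, Matrix.mulVec, Finset.mul_sum]
  rw [← Fin.sum_univ_eq_sum_range (fun k => ∑ j ∈ range n,
    (fun m => if h : m < n then x ⟨m, h⟩ else 0) k * aN n k j *
    (fun m => if h : m < n then x ⟨m, h⟩ else 0) j) n]
  refine Finset.sum_congr rfl fun i _ => ?_
  rw [← Fin.sum_univ_eq_sum_range (fun k => (fun m => if h : m < n then x ⟨m, h⟩ else 0) ↑i
    * aN n ↑i k * (fun m => if h : m < n then x ⟨m, h⟩ else 0) k) n]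
  refine Finset.sum_congr rfl fun j _ => ?_
  simp only [Fin.is_lt, dif_pos, Fin.eta, linkM_eq]
  ring

/-- `M` is negative definite: for every nonzero `x ∈ ℚⁿ`, `xᵀ M x < 0`. -/
theorem stmt_1 (n : ℕ) (hn : 4 ≤ n) (x : Fin n → ℚ) (hx : x ≠ 0) :
    x ⬝ᵥ (linkM n).mulVec x < 0 := by
  obtain ⟨i, hi⟩ := Function.ne_iff.mp hx
  rw [bridge n x]
  set e : ℕ → ℚ := fun k => if h : k < n then x ⟨k, h⟩ else 0 with he
  obtain ⟨h1, h2⟩ := qF_key n hn e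
  have hei : e (i : ℕ) ≠ 0 := by
    simpa [he, i.isLt] using hi
  by_cases ha : e (n-1) = 0
  · exact h2 ⟨ha, i, i.isLt, hei⟩
  · have hsq := sq_pos_of_ne_zero ha
    have hc0 : (0:ℚ) < (n:ℚ) := by
      have : (4:ℚ) ≤ (n:ℚ) := by exact_mod_cast hn
      linarith
    nlinarith
end

section
/- det M₀ = (−1)^n · (n + 3). (In the paper's notation, det M₀ = (−1)^{t₀−1}(t₀ + 2), which via the formula tb(K₀) = −2 + det M₀ / det M yields the Thurston–Bennequin invariant tb(K₀) = t₀.) -/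
/-!
`M = -AᵀA` is minus the Gram matrix of the vectors `e j + e (next j)`, where `next` sends `0`
and `1` to `2` and `j ≥ 2` to `j + 1` (the term is dropped for the last vector), and
`b = -Aᵀw` for the alternating vector `w = ((-1)^n, (-1)^n, -(-1)^n, …, 1, -1, 2)`, whose
squared norm is `(n - 1) + 4 = n + 3`. The bordered matrix then factors as
`[[1, wᵀ], [0, Aᵀ]] * [[w ⬝ w, 0], [-w, -A]]`, and `A` is unitriangular, so
`det M₀ = (-1)^n (w ⬝ w) (det A)² = (-1)^n (n + 3)`.
-/

open Matrix

/-- The extended linking matrix: an `(n+1) x (n+1)` matrix (indices `0, 1, ..., n` as in the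
paper), whose `(0,0)` entry is `0`, whose first row and first column (off the corner) are a
given vector `c`, and whose remaining `n x n` block is the linking matrix `linkM n`. -/
def extM (n : ℕ) (c : Fin n → ℚ) : Matrix (Fin (n + 1)) (Fin (n + 1)) ℚ :=
  Matrix.of (Fin.cases (Fin.cases (0 : ℚ) c)
    (fun i => Fin.cases (c i) (fun j => linkM n i j)))

/-- The vector of linking numbers of `K₀` with the surgery curves: `bₙ₋₁ = -1`, `bₙ = -2`
(paper indexing), all other entries `0`. -/
def vecB (n : ℕ) : Fin n → ℚ := fun i =>
  if (i : ℕ) = n - 2 then -1 else if (i : ℕ) = n - 1 then -2 else 0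

namespace Matrix

variable {R : Type*} {n : ℕ}

def bordered (a : R) (u v : Fin n → R) (B : Matrix (Fin n) (Fin n) R) :
    Matrix (Fin (n + 1)) (Fin (n + 1)) R :=
  of (Fin.cases (Fin.cases a u) fun i => Fin.cases (v i) (B i))

section bordered

variable (a : R) (u v : Fin n → R) (B : Matrix (Fin n) (Fin n) R)

@[simp] theorem bordered_zero_zero : bordered a u v B 0 0 = a := rfl

@[simp] theorem bordered_zero_succ (j : Fin n) : bordered a u v B 0 j.succ = u j := rfl

@[simp] theorem bordered_succ_zero (i : Fin n) : bordered a u v B i.succ 0 = v i := rfl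

@[simp] theorem bordered_succ_succ (i j : Fin n) : bordered a u v B i.succ j.succ = B i j := rfl

@[simp] theorem submatrix_succ_bordered : (bordered a u v B).submatrix Fin.succ Fin.succ = B := rfl

end bordered

variable [CommRing R]

theorem det_bordered_zero_left (a : R) (u : Fin n → R) (B : Matrix (Fin n) (Fin n) R) :
    (bordered a u 0 B).det = a * B.det := by
  simp [det_succ_column_zero, Fin.sum_univ_succ]

theorem det_bordered_zero_top (a : R) (v : Fin n → R) (B : Matrix (Fin n) (Fin n) R) :
    (bordered a 0 v B).det = a * B.det := by
  simp [det_succ_row_zero, Fin.sum_univ_succ]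

theorem bordered_mul_bordered (a a' : R) (u v u' v' : Fin n → R)
    (B B' : Matrix (Fin n) (Fin n) R) :
    bordered a u v B * bordered a' u' v' B' =
      bordered (a * a' + u ⬝ᵥ v') (a • u' + u ᵥ* B') (a' • v + B *ᵥ v')
        (vecMulVec v u' + B * B') := by
  ext i j
  cases i using Fin.cases <;> cases j using Fin.cases <;>
    simp [mul_apply, Fin.sum_univ_succ, dotProduct, vecMul, mulVec, vecMulVec, mul_comm]

theorem det_bordered_neg_gram (A : Matrix (Fin n) (Fin n) R) (w : Fin n → R) :
    (bordered 0 (-(w ᵥ* A)) (-(w ᵥ* A)) (-(Aᵀ * A))).det =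
      (-1) ^ n * (w ⬝ᵥ w) * A.det ^ 2 := by
  have hfactor : bordered 0 (-(w ᵥ* A)) (-(w ᵥ* A)) (-(Aᵀ * A)) =
      bordered 1 w 0 Aᵀ * bordered (w ⬝ᵥ w) 0 (-w) (-A) := by
    rw [bordered_mul_bordered]
    simp [mulVec_transpose, vecMul_neg, neg_vecMul]
  rw [hfactor, det_mul, det_bordered_zero_left, det_bordered_zero_top, det_transpose, det_neg,
    Fintype.card_fin]
  ring

end Matrix

theorem Fin.sum_ite_val_eq {M : Type*} [AddCommMonoid M] (n m : ℕ) (f : Fin n → M) :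
    (∑ k : Fin n, if (k : ℕ) = m then f k else 0) = if h : m < n then f ⟨m, h⟩ else 0 := by
  split_ifs with h
  · rw [Fintype.sum_eq_single ⟨m, h⟩ fun k hk => if_neg fun e => hk (Fin.ext e)]
    simp
  · exact Finset.sum_eq_zero fun k _ => if_neg fun (e : (k : ℕ) = m) => h (e ▸ k.isLt)

def nextIdx (j : ℕ) : ℕ := if j ≤ 1 then 2 else j + 1

theorem lt_nextIdx (j : ℕ) : j < nextIdx j := by
  unfold nextIdx; split_ifs <;> omega

theorem nextIdx_nextIdx (j : ℕ) : nextIdx (nextIdx j) = nextIdx j + 1 := by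
  unfold nextIdx; split_ifs <;> omega

def nextMatrix (n : ℕ) : Matrix (Fin n) (Fin n) ℚ :=
  of fun k j => if (k : ℕ) = nextIdx j then 1 else 0

-- Column `j` is `e j + e (nextIdx j)`, with the second term absent when `nextIdx j = n`.
def linkFactor (n : ℕ) : Matrix (Fin n) (Fin n) ℚ := 1 + nextMatrix n

def borderWeight (n : ℕ) : Fin n → ℚ := fun j =>
  if (j : ℕ) = n - 1 then 2 else (-1) ^ (n + nextIdx j)

theorem nextMatrix_apply_of_le {n : ℕ} {k j : Fin n} (h : k ≤ j) : nextMatrix n k j = 0 :=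
  if_neg (by have := lt_nextIdx j; omega)

theorem det_linkFactor (n : ℕ) : (linkFactor n).det = 1 := by
  have hlower : (linkFactor n).IsLowerTriangular := fun k j (hkj : k < j) => by
    simp [linkFactor, hkj.ne, nextMatrix_apply_of_le hkj.le]
  rw [det_of_isLowerTriangular _ hlower]
  simp [linkFactor, nextMatrix_apply_of_le]

theorem linkM_eq_neg_gram {n : ℕ} (hn : 3 ≤ n) :
    linkM n = -((linkFactor n)ᵀ * linkFactor n) := by
  have hgram : (linkFactor n)ᵀ * linkFactor n =
      1 + nextMatrix n + (nextMatrix n)ᵀ + (nextMatrix n)ᵀ * nextMatrix n := by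
    simp only [linkFactor, transpose_add, transpose_one, add_mul, mul_add, one_mul, mul_one]
    abel
  ext i j
  rw [hgram, neg_apply]
  simp only [Matrix.add_apply, one_apply, transpose_apply, mul_apply, nextMatrix, of_apply,
    ite_mul, one_mul, zero_mul, Fin.sum_ite_val_eq, linkM]
  simp only [Fin.ext_iff, nextIdx]
  split_ifs <;> first | omega | norm_num

theorem vecMul_linkFactor_apply {n : ℕ} (v : Fin n → ℚ) (j : Fin n) :
    (v ᵥ* linkFactor n) j = v j + if h : nextIdx j < n then v ⟨nextIdx j, h⟩ else 0 := by
  rw [linkFactor, vecMul_add, vecMul_one, Pi.add_apply]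
  simp only [vecMul, dotProduct, nextMatrix, of_apply, mul_ite, mul_one, mul_zero]
  rw [Fin.sum_ite_val_eq]

theorem borderWeight_add_next {n : ℕ} (hn : 4 ≤ n) (j : Fin n) (h : nextIdx j < n) :
    borderWeight n j + borderWeight n ⟨nextIdx j, h⟩ = if (j : ℕ) = n - 2 then 1 else 0 := by
  have hj : (j : ℕ) ≠ n - 1 := by have := lt_nextIdx j; omega
  have hnext : nextIdx j = n - 1 ↔ (j : ℕ) = n - 2 := by unfold nextIdx; split_ifs <;> omega
  simp only [borderWeight, if_neg hj, nextIdx_nextIdx]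
  by_cases hlast : (j : ℕ) = n - 2
  · have hodd : n + nextIdx j = 2 * (n - 1) + 1 := by omega
    rw [if_pos (hnext.2 hlast), if_pos hlast, hodd, pow_succ, pow_mul]
    norm_num
  · rw [if_neg (mt hnext.1 hlast), if_neg hlast, ← add_assoc, pow_succ]
    ring

theorem vecB_eq_neg_vecMul {n : ℕ} (hn : 4 ≤ n) :
    vecB n = -(borderWeight n ᵥ* linkFactor n) := by
  ext j
  rw [Pi.neg_apply, vecMul_linkFactor_apply]
  by_cases hj : (j : ℕ) = n - 1
  · have hout : ¬ nextIdx j < n := by have := lt_nextIdx j; omega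
    rw [dif_neg hout, add_zero]
    simp [vecB, borderWeight, hj, show n - 1 ≠ n - 2 by omega]
  · have hin : nextIdx j < n := by unfold nextIdx; split_ifs <;> omega
    rw [dif_pos hin, borderWeight_add_next hn j hin]
    simp only [vecB, if_neg hj]
    split_ifs <;> norm_num

theorem borderWeight_dotProduct_self {n : ℕ} (hn : 1 ≤ n) :
    borderWeight n ⬝ᵥ borderWeight n = n + 3 := by
  have hsq (j : Fin n) :
      borderWeight n j * borderWeight n j = 1 + if (j : ℕ) = n - 1 then 3 else 0 := by
    unfold borderWeight
    split_ifs <;> norm_num [← pow_add, ← two_mul, pow_mul]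
  simp only [dotProduct, hsq, Finset.sum_add_distrib, Fin.sum_ite_val_eq]
  simp [show n - 1 < n by omega]

/-- `det M₀ = (-1)^n * (n + 3)`. -/
theorem stmt_2 (n : ℕ) (hn : 4 ≤ n) :
    (extM n (vecB n)).det = (-1 : ℚ) ^ n * (n + 3) := by
  have hext : extM n (vecB n) = bordered 0 (vecB n) (vecB n) (linkM n) := rfl
  rw [hext, linkM_eq_neg_gram (by omega), vecB_eq_neg_vecMul hn, det_bordered_neg_gram,
    borderWeight_dotProduct_self (by omega), det_linkFactor, one_pow, mul_one]
end

section
/- det M₁ = 5 · (−1)^n. (In the paper's notation, det M₁ = 5(−1)^{t₀−1}, which via the formula tb(K₁) = −3 + det M₁ / det M yields the Thurston–Bennequin invariant tb(K₁) = 2.) -/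
/-!
The last surgery curve ends a chain, so Laplace expansion along the last row and then along
the last column of the resulting minor gives the continuant recurrence
`det B_{m+2}(d) = d · det B_{m+1}(-2) - det B_m(-2)`, where `B_m(d)` is the extended linking
matrix of size `m + 1` with last diagonal entry `d`. For `d = -2` this is the recurrence of
`(-1)^m (5m + 4)`, seeded by `det B_2(-2) = 14` and `det B_3(-2) = -19`; for `d = -1` it yields
`det M₁ = (-1)^n ((5n - 1) - (5n - 6)) = 5 (-1)^n`.
-/

open Matrix

/-- The vector of linking numbers of `K₁` with the surgery curves: `c₁ = -1`, `c₂ = -3`,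
`c₃ = -1` (paper indexing), all other entries `0`. -/
def vecC1 (n : ℕ) : Fin n → ℚ := fun i =>
  if (i : ℕ) = 0 then -1 else if (i : ℕ) = 1 then -3 else if (i : ℕ) = 2 then -1 else 0

theorem Matrix.det_succ_succ_of_last_row_col_eq_zero {R : Type*} [CommRing R] {k : ℕ}
    (A : Matrix (Fin (k + 2)) (Fin (k + 2)) R)
    (hrow : ∀ j : Fin k, A (Fin.last _) j.castSucc.castSucc = 0)
    (hcol : ∀ i : Fin k, A i.castSucc.castSucc (Fin.last _) = 0) :
    A.det = A (Fin.last _) (Fin.last _) * (A.submatrix Fin.castSucc Fin.castSucc).det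
      - A (Fin.last _) (Fin.last k).castSucc * A (Fin.last k).castSucc (Fin.last _)
        * ((A.submatrix Fin.castSucc Fin.castSucc).submatrix Fin.castSucc Fin.castSucc).det := by
  have hminor : (A.submatrix Fin.castSucc (Fin.last k).castSucc.succAbove).det
      = A (Fin.last k).castSucc (Fin.last _)
        * ((A.submatrix Fin.castSucc Fin.castSucc).submatrix Fin.castSucc Fin.castSucc).det := by
    rw [det_succ_column _ (Fin.last k), Fin.sum_univ_castSucc]
    simp only [submatrix_apply, Fin.succAbove_castSucc_self, Fin.succ_last, hcol, mul_zero,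
      zero_mul, Finset.sum_const_zero, zero_add, Fin.val_last, ← two_mul, pow_mul, neg_one_sq,
      one_pow, one_mul, submatrix_submatrix, Fin.succAbove_last]
    congr 3
    funext j
    exact Fin.succAbove_castSucc_of_lt _ _ (Fin.castSucc_lt_last j)
  rw [det_succ_row _ (Fin.last _), Fin.sum_univ_castSucc, Fin.sum_univ_castSucc]
  simp only [hrow, mul_zero, zero_mul, Finset.sum_const_zero, zero_add, Fin.succAbove_last,
    hminor, Fin.val_last, Fin.val_castSucc]
  rw [show k + 1 + k = 2 * k + 1 by ring, ← two_mul, pow_succ, pow_mul, pow_mul]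
  simp only [neg_one_sq, one_pow]
  ring

def linkVec (j : ℕ) : ℚ :=
  if j = 1 then -1 else if j = 2 then -3 else if j = 3 then -1 else 0

/- `extLinkMat n (-1)` is `M₁`. The last diagonal entry is a parameter because deleting the last
row and column of `M₁` leaves a matrix of the same shape with last diagonal entry `-2`; entries
are given on natural-number indices so that every case analysis is linear arithmetic. -/
def extLinkEntry (m : ℕ) (d : ℚ) (i j : ℕ) : ℚ :=
  if i = 0 then (if j = 0 then 0 else linkVec j)
  else if j = 0 then linkVec i
  else if i = j then (if i = m then d else -2)
  else if i + 1 = j ∨ j + 1 = i then -1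
  else if (i = 1 ∧ j = 3) ∨ (i = 3 ∧ j = 1) then -1
  else 0

def extLinkMat (m : ℕ) (d : ℚ) : Matrix (Fin (m + 1)) (Fin (m + 1)) ℚ :=
  Matrix.of fun i j => extLinkEntry m d i j

theorem extM_vecC1_eq (n : ℕ) : extM n (vecC1 n) = extLinkMat n (-1) := by
  ext i j
  induction i using Fin.cases <;> induction j using Fin.cases <;>
    simp only [extM, extLinkMat, linkM, vecC1, linkVec, extLinkEntry, of_apply, Fin.cases_zero,
      Fin.cases_succ, Fin.val_zero, Fin.val_succ, Fin.ext_iff] <;>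
    split_ifs <;> first | rfl | contradiction | omega

theorem extLinkMat_submatrix_castSucc (m : ℕ) (d : ℚ) :
    (extLinkMat (m + 1) d).submatrix Fin.castSucc Fin.castSucc = extLinkMat m (-2) := by
  ext i j
  have := i.isLt
  simp only [extLinkMat, extLinkEntry, submatrix_apply, of_apply, Fin.val_castSucc]
  split_ifs <;> first | rfl | contradiction | omega

theorem det_extLinkMat_succ_succ (m : ℕ) (hm : 2 ≤ m) (d : ℚ) :
    (extLinkMat (m + 2) d).det = d * (extLinkMat (m + 1) (-2)).det - (extLinkMat m (-2)).det := by
  rw [det_succ_succ_of_last_row_col_eq_zero, extLinkMat_submatrix_castSucc,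
    extLinkMat_submatrix_castSucc]
  · simp [extLinkMat, extLinkEntry, linkVec]
  all_goals
    intro j
    have := j.isLt
    simp only [extLinkMat, extLinkEntry, of_apply, Fin.val_castSucc, Fin.val_last, linkVec]
    split_ifs <;> first | rfl | contradiction | omega

theorem det_extLinkMat_two : (extLinkMat 2 (-2)).det = 14 := by
  rw [det_fin_three]
  simp [extLinkMat, extLinkEntry, linkVec]
  norm_num

theorem det_extLinkMat_three : (extLinkMat 3 (-2)).det = -19 := by
  simp [det_succ_row_zero, Fin.sum_univ_succ, extLinkMat, extLinkEntry, linkVec, Fin.succAbove]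
  norm_num

theorem det_extLinkMat_neg_two (m : ℕ) (hm : 2 ≤ m) :
    (extLinkMat m (-2)).det = (-1) ^ m * (5 * m + 4) := by
  induction m using Nat.strong_induction_on with
  | _ m ih =>
    obtain rfl | rfl | ⟨k, rfl⟩ : m = 2 ∨ m = 3 ∨ ∃ k, m = k + 2 + 2 := by
      rcases Nat.lt_or_ge m 4 with h | h
      · omega
      · exact Or.inr (Or.inr ⟨m - 4, by omega⟩)
    · rw [det_extLinkMat_two]; norm_num
    · rw [det_extLinkMat_three]; norm_num
    · rw [det_extLinkMat_succ_succ (k + 2) (by omega), ih (k + 2 + 1) (by omega) (by omega),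
        ih (k + 2) (by omega) (by omega)]
      push_cast
      ring

/-- `det M₁ = 5 * (-1)^n`. -/
theorem stmt_3 (n : ℕ) (hn : 4 ≤ n) :
    (extM n (vecC1 n)).det = 5 * (-1 : ℚ) ^ n := by
  obtain ⟨m, rfl⟩ : ∃ m, n = m + 2 + 2 := ⟨n - 4, by omega⟩
  rw [extM_vecC1_eq, det_extLinkMat_succ_succ (m + 2) (by omega),
    det_extLinkMat_neg_two (m + 2 + 1) (by omega), det_extLinkMat_neg_two (m + 2) (by omega)]
  push_cast
  ring
end

section
/- det M₂ = 5 · (−1)^n. (In the paper's notation, det M₂ = 5(−1)^{t₀−1}, which via the formula tb(K₂) = −3 + det M₂ / det M yields the Thurston–Bennequin invariant tb(K₂) = 2.) -/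
open Matrix

/-- The vector of linking numbers of `K₂` with the surgery curves: `c₁ = -3`, `c₂ = -1`,
`c₃ = -1` (paper indexing), all other entries `0`. -/
def vecC2 (n : ℕ) : Fin n → ℚ := fun i =>
  if (i : ℕ) = 0 then -3 else if (i : ℕ) = 1 then -1 else if (i : ℕ) = 2 then -1 else 0

/-!
The last surgery curve `n` is a leaf of the linking graph, attached only to `n - 1`, so expanding
the determinant along it gives `D(n, d) = d · D(n-1, -2) - D(n-2, -2)`, where `D(n, d)` is the
determinant of `M₂` with its last diagonal entry replaced by `d`. Hence `a n := D(n, -2)` satisfies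
`a (n+2) = -2 a (n+1) - a n` for `n ≥ 2`; with `a 2 = 14` and `a 3 = -19` this gives
`a n = (-1)^n (5n + 4)`, and then `det M₂ = D(n, -1) = -a (n-1) - a (n-2) = 5 (-1)^n`.
-/

namespace Matrix

variable {R : Type*} [CommRing R]

theorem det_eq_of_last_pendant {k : ℕ} (A : Matrix (Fin (k + 2)) (Fin (k + 2)) R)
    (hrow : ∀ j : Fin k, A (Fin.last _) j.castSucc.castSucc = 0)
    (hcol : ∀ i : Fin k, A i.castSucc.castSucc (Fin.last _) = 0) :
    A.det = A (Fin.last _) (Fin.last _) * (A.submatrix Fin.castSucc Fin.castSucc).det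
      - A (Fin.last _) (Fin.last k).castSucc * A (Fin.last k).castSucc (Fin.last _) *
        ((A.submatrix Fin.castSucc Fin.castSucc).submatrix Fin.castSucc Fin.castSucc).det := by
  have hminor : (A.submatrix Fin.castSucc (Fin.last k).castSucc.succAbove).det
      = A (Fin.last k).castSucc (Fin.last _) *
        ((A.submatrix Fin.castSucc Fin.castSucc).submatrix Fin.castSucc Fin.castSucc).det := by
    rw [det_succ_column _ (Fin.last k), Fin.sum_univ_castSucc,
      Finset.sum_eq_zero fun i _ => by simp [hcol]]
    simp [submatrix_submatrix, Function.comp_def, Fin.succAbove_of_castSucc_lt]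
  rw [det_succ_row _ (Fin.last _), Fin.sum_univ_castSucc, Fin.sum_univ_castSucc,
    Finset.sum_eq_zero fun j _ => by simp [hrow], Fin.succAbove_last, hminor]
  have hsign : (-1 : R) ^ ((Fin.last (k + 1) : ℕ) + (Fin.last k).castSucc) = -1 := by
    simp [show k + 1 + k = 2 * k + 1 by ring, pow_succ, pow_mul]
  rw [hsign, ← two_mul, pow_mul, neg_one_sq, one_pow]
  ring

end Matrix

/-- Index `0` is `K₂`; for distinct nonzero indices, `i + j = 4` is the extra link between the
curves `1` and `3`. -/
theorem extM_vecC2_apply (n : ℕ) (i j : Fin (n + 1)) :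
    extM n (vecC2 n) i j =
      if (i : ℕ) = j then (if (i : ℕ) = 0 then 0 else if (i : ℕ) = n then -1 else -2)
      else if (i : ℕ) = 0 ∨ (j : ℕ) = 0 then
        (if (i : ℕ) + j = 1 then -3 else if (i : ℕ) + j = 2 ∨ (i : ℕ) + j = 3 then -1 else 0)
      else if (i : ℕ) + 1 = j ∨ (j : ℕ) + 1 = i ∨ (i : ℕ) + j = 4 then -1
      else 0 := by
  cases i using Fin.cases <;> cases j using Fin.cases <;>
    simp only [extM, linkM, vecC2, of_apply, Fin.cases_zero, Fin.cases_succ, Fin.val_succ,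
      Fin.val_zero, Fin.ext_iff, zero_add, add_zero, true_or, or_true, Nat.add_right_cancel_iff,
      Nat.add_one_ne_zero, or_self, if_false] <;>
    split_ifs <;> first | rfl | (exfalso; omega)

def extMWithLast (n : ℕ) (d : ℚ) : Matrix (Fin (n + 1)) (Fin (n + 1)) ℚ :=
  extM n (vecC2 n) + single (Fin.last n) (Fin.last n) (d + 1)

theorem extMWithLast_neg_one (n : ℕ) : extMWithLast n (-1) = extM n (vecC2 n) := by
  simp [extMWithLast]

theorem extMWithLast_apply (n : ℕ) (d : ℚ) (i j : Fin (n + 1)) :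
    extMWithLast n d i j =
      extM n (vecC2 n) i j + if (i : ℕ) = n ∧ (j : ℕ) = n then d + 1 else 0 := by
  simp [extMWithLast, single_apply, Fin.ext_iff, eq_comm]

theorem submatrix_castSucc_extMWithLast (n : ℕ) (hn : n ≠ 0) (d : ℚ) :
    (extMWithLast (n + 1) d).submatrix Fin.castSucc Fin.castSucc = extMWithLast n (-2) := by
  ext i j
  have := i.isLt
  have := j.isLt
  simp only [submatrix_apply, extMWithLast_apply, extM_vecC2_apply, Fin.val_castSucc]
  split_ifs <;> first | (exfalso; omega) | norm_num

theorem det_extMWithLast_add_two (n : ℕ) (hn : 2 ≤ n) (d : ℚ) :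
    (extMWithLast (n + 2) d).det
      = d * (extMWithLast (n + 1) (-2)).det - (extMWithLast n (-2)).det := by
  rw [det_eq_of_last_pendant (k := n + 1), submatrix_castSucc_extMWithLast _ (by omega),
    submatrix_castSucc_extMWithLast _ (by omega)]
  · simp [extMWithLast_apply, extM_vecC2_apply]
  · intro j
    have := j.isLt
    simp only [extMWithLast_apply, extM_vecC2_apply, Fin.val_castSucc, Fin.val_last]
    split_ifs <;> first | (exfalso; omega) | norm_num
  · intro i
    have := i.isLt
    simp only [extMWithLast_apply, extM_vecC2_apply, Fin.val_castSucc, Fin.val_last]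
    split_ifs <;> first | (exfalso; omega) | norm_num

theorem det_extMWithLast_two : (extMWithLast 2 (-2)).det = 14 := by
  rw [det_fin_three]
  norm_num [extMWithLast_apply, extM_vecC2_apply]

theorem det_extMWithLast_three : (extMWithLast 3 (-2)).det = -19 := by
  rw [det_succ_row_zero]
  simp [Fin.sum_univ_succ, det_fin_three, extMWithLast_apply, extM_vecC2_apply, Fin.succAbove]
  norm_num

theorem det_extMWithLast_neg_two (n : ℕ) (hn : 2 ≤ n) :
    (extMWithLast n (-2)).det = (-1) ^ n * (5 * n + 4) := by
  obtain ⟨m, rfl⟩ := Nat.exists_eq_add_of_le' hn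
  induction m using Nat.twoStepInduction with
  | zero => rw [det_extMWithLast_two]; norm_num
  | one => rw [det_extMWithLast_three]; norm_num
  | more m ih₀ ih₁ =>
    rw [det_extMWithLast_add_two _ (by omega), ih₀ (by omega), ih₁ (by omega)]
    push_cast
    ring

/-- `det M₂ = 5 * (-1)^n`. -/
theorem stmt_4 (n : ℕ) (hn : 4 ≤ n) :
    (extM n (vecC2 n)).det = 5 * (-1 : ℚ) ^ n := by
  obtain ⟨m, rfl⟩ := Nat.exists_eq_add_of_le' hn
  rw [← extMWithLast_neg_one, det_extMWithLast_add_two _ (by omega),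
    det_extMWithLast_neg_two _ (by omega), det_extMWithLast_neg_two _ (by omega)]
  push_cast
  ring
end

section
/- The vector x ∈ ℚⁿ defined by x₁ = −2 − (−1)^n, x₂ = 2 − (−1)^n, and x_k = (−1)^{n−k+1} · k for 3 ≤ k ≤ n, satisfies M x = v. (Equivalently, since det M = (−1)^n ≠ 0, the solution x = M⁻¹ v of M x = rot has first two entries (−1, 3) when t₀ = n + 1 is even and (−3, 1) when t₀ is odd, and last entry −(t₀ − 1), as asserted in Section 6 of the paper.) -/
open Matrix

/-- The vector of rotation numbers of the surgery curves: `v₁ = 2`, `v₂ = -2`, `vₙ = 1`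
(paper indexing), all other entries `0`. -/
def vecV (n : ℕ) : Fin n → ℚ := fun i =>
  if (i : ℕ) = 0 then 2 else if (i : ℕ) = 1 then -2 else if (i : ℕ) = n - 1 then 1 else 0

/-- The solution vector `x`: `x₁ = -2 - (-1)^n`, `x₂ = 2 - (-1)^n`, and
`xₖ = (-1)^(n-k+1) * k` for `3 ≤ k ≤ n` (paper indexing `k = i + 1`). -/
def vecX (n : ℕ) : Fin n → ℚ := fun i =>
  if (i : ℕ) = 0 then -2 - (-1 : ℚ) ^ n
  else if (i : ℕ) = 1 then 2 - (-1 : ℚ) ^ n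
  else (-1 : ℚ) ^ (n - ((i : ℕ) + 1) + 1) * ((i : ℕ) + 1)

/-- The vector `x` satisfies `M x = v`. -/
theorem stmt_5 (n : ℕ) (hn : 4 ≤ n) :
    (linkM n).mulVec (vecX n) = vecV n := by
  have hM0 : ∀ i j : Fin n, (i:ℕ) ≠ (j:ℕ) → (i:ℕ)+1 ≠ (j:ℕ) → (j:ℕ)+1 ≠ (i:ℕ) →
      ¬(((i:ℕ)=0 ∧ (j:ℕ)=2) ∨ ((i:ℕ)=2 ∧ (j:ℕ)=0)) → linkM n i j = 0 := by
    intro i j h1 h2 h3 h4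
    simp only [linkM, Matrix.of_apply]
    rw [if_neg (by simp [Fin.ext_iff]; exact h1), if_neg (by push_neg; exact ⟨h2, h3⟩),
      if_neg h4]
  have hpow : ∀ k : ℕ, (-1 : ℚ) ^ (k + 2) = (-1) ^ k := by
    intro k; rw [pow_add]; norm_num
  have p4 : (-1:ℚ) ^ n = (-1) ^ (n - 4) := by
    conv_lhs => rw [show n = n - 4 + 2 + 2 from by omega]
    rw [hpow, hpow]
  funext i
  simp only [Matrix.mulVec, dotProduct]
  have key : ∀ (s : Finset (Fin n)), (∀ j : Fin n, j ∉ s → linkM n i j = 0) →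
      ∑ j, linkM n i j * vecX n j = ∑ j ∈ s, linkM n i j * vecX n j := by
    intro s h
    exact (Finset.sum_subset (Finset.subset_univ s)
      (fun j _ hj => by rw [h j hj, zero_mul])).symm
  set k := (i : ℕ) with hk
  have hkn : k < n := i.isLt
  have Ediag : ∀ (m : ℕ) (h : m < n), k = m → m ≠ n - 1 → linkM n i ⟨m, h⟩ = -2 := by
    intro m h hm hm'
    simp only [linkM, Matrix.of_apply, Fin.ext_iff]
    rw [if_pos hm, if_neg (by omega)]
  have Elast : ∀ (h : n - 1 < n), k = n - 1 → linkM n i ⟨n-1, h⟩ = -1 := by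
    intro h hm
    simp only [linkM, Matrix.of_apply, Fin.ext_iff]
    rw [if_pos hm, if_pos hm]
  have Eoff : ∀ (m : ℕ) (h : m < n), k + 1 = m ∨ m + 1 = k → linkM n i ⟨m, h⟩ = -1 := by
    intro m h hm
    simp only [linkM, Matrix.of_apply, Fin.ext_iff]
    rw [if_neg (by omega), if_pos hm]
  have Eextra : ∀ (m : ℕ) (h : m < n), (k = 0 ∧ m = 2) ∨ (k = 2 ∧ m = 0) →
      linkM n i ⟨m, h⟩ = -1 := by
    intro m h hm
    simp only [linkM, Matrix.of_apply, Fin.ext_iff]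
    rw [if_neg (by omega), if_neg (by omega), if_pos hm]
  have X0 : ∀ (h : (0:ℕ) < n), vecX n ⟨0, h⟩ = -2 - (-1:ℚ)^n := by
    intro h; simp [vecX]
  have X1 : ∀ (h : (1:ℕ) < n), vecX n ⟨1, h⟩ = 2 - (-1:ℚ)^n := by
    intro h; simp [vecX]
  have Xgen : ∀ (m : ℕ) (h : m < n), 2 ≤ m →
      vecX n ⟨m, h⟩ = (-1:ℚ) ^ (n - m) * (m + 1) := by
    intro m h hm
    simp only [vecX]
    rw [if_neg (by omega), if_neg (by omega),
      show n - (m + 1) + 1 = n - m from by omega]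
  rcases (by omega : k = 0 ∨ k = 1 ∨ k = 2 ∨ (3 ≤ k ∧ k ≤ n - 2) ∨ k = n - 1)
    with h0 | h1 | h2 | ⟨hm3, hm2⟩ | hl
  · -- row 0
    rw [key {⟨0, by omega⟩, ⟨1, by omega⟩, ⟨2, by omega⟩} ?_]
    · rw [Finset.sum_insert (by simp only [Finset.mem_insert, Finset.mem_singleton, Fin.ext_iff]; omega),
        Finset.sum_insert (by simp only [Finset.mem_singleton, Fin.ext_iff]; omega),
        Finset.sum_singleton,
        Ediag 0 (by omega) h0 (by omega), Eoff 1 (by omega) (by omega),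
        Eextra 2 (by omega) (by omega), X0, X1, Xgen 2 (by omega) (by omega)]
      rw [show n - 2 = (n - 4) + 2 from by omega, hpow, p4, vecV, if_pos h0]
      push_cast; ring
    · intro j hj
      simp only [Finset.mem_insert, Finset.mem_singleton, Fin.ext_iff] at hj
      push_neg at hj
      exact hM0 i j (by omega) (by omega) (by omega) (by omega)
  · -- row 1
    rw [key {⟨0, by omega⟩, ⟨1, by omega⟩, ⟨2, by omega⟩} ?_]
    · rw [Finset.sum_insert (by simp only [Finset.mem_insert, Finset.mem_singleton, Fin.ext_iff]; omega),
        Finset.sum_insert (by simp only [Finset.mem_singleton, Fin.ext_iff]; omega),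
        Finset.sum_singleton,
        Eoff 0 (by omega) (by omega), Ediag 1 (by omega) h1 (by omega),
        Eoff 2 (by omega) (by omega), X0, X1, Xgen 2 (by omega) (by omega)]
      rw [show n - 2 = (n - 4) + 2 from by omega, hpow, p4, vecV,
        if_neg (by omega), if_pos h1]
      push_cast; ring
    · intro j hj
      simp only [Finset.mem_insert, Finset.mem_singleton, Fin.ext_iff] at hj
      push_neg at hj
      exact hM0 i j (by omega) (by omega) (by omega) (by omega)
  · -- row 2
    rw [key {⟨0, by omega⟩, ⟨1, by omega⟩, ⟨2, by omega⟩, ⟨3, by omega⟩} ?_]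
    · rw [Finset.sum_insert (by simp only [Finset.mem_insert, Finset.mem_singleton, Fin.ext_iff]; omega),
        Finset.sum_insert (by simp only [Finset.mem_insert, Finset.mem_singleton, Fin.ext_iff]; omega),
        Finset.sum_insert (by simp only [Finset.mem_singleton, Fin.ext_iff]; omega),
        Finset.sum_singleton,
        Eextra 0 (by omega) (by omega), Eoff 1 (by omega) (by omega),
        Ediag 2 (by omega) h2 (by omega), Eoff 3 (by omega) (by omega),
        X0, X1, Xgen 2 (by omega) (by omega), Xgen 3 (by omega) (by omega)]
      rw [show n - 2 = (n - 4) + 2 from by omega, hpow,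
        show n - 3 = n - 4 + 1 from by omega, pow_succ, p4, vecV,
        if_neg (by omega), if_neg (by omega), if_neg (by omega)]
      push_cast; ring
    · intro j hj
      simp only [Finset.mem_insert, Finset.mem_singleton, Fin.ext_iff] at hj
      push_neg at hj
      exact hM0 i j (by omega) (by omega) (by omega) (by omega)
  · -- middle rows
    rw [key {⟨k - 1, by omega⟩, ⟨k, by omega⟩, ⟨k + 1, by omega⟩} ?_]
    · rw [Finset.sum_insert (by simp only [Finset.mem_insert, Finset.mem_singleton, Fin.ext_iff]; omega),
        Finset.sum_insert (by simp only [Finset.mem_singleton, Fin.ext_iff]; omega),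
        Finset.sum_singleton,
        Eoff (k-1) (by omega) (by omega), Ediag k (by omega) rfl (by omega),
        Eoff (k+1) (by omega) (by omega),
        Xgen (k-1) (by omega) (by omega), Xgen k (by omega) (by omega),
        Xgen (k+1) (by omega) (by omega)]
      rw [show n - (k-1) = (n - (k+1)) + 2 from by omega, hpow,
        show n - k = (n - (k+1)) + 1 from by omega, pow_succ,
        show ((k - 1 : ℕ) : ℚ) = (k : ℚ) - 1 from by
          rw [Nat.cast_sub (by omega)]; norm_num,
        vecV, if_neg (by omega), if_neg (by omega), if_neg (by omega)]
      push_cast; ring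
    · intro j hj
      simp only [Finset.mem_insert, Finset.mem_singleton, Fin.ext_iff] at hj
      push_neg at hj
      exact hM0 i j (by omega) (by omega) (by omega) (by omega)
  · -- last row
    rw [key {⟨n - 2, by omega⟩, ⟨n - 1, by omega⟩} ?_]
    · rw [Finset.sum_insert (by simp only [Finset.mem_singleton, Fin.ext_iff]; omega),
        Finset.sum_singleton,
        Eoff (n-2) (by omega) (by omega), Elast (by omega) hl,
        Xgen (n-2) (by omega) (by omega), Xgen (n-1) (by omega) (by omega)]
      rw [show n - (n-2) = 2 from by omega, show n - (n-1) = 1 from by omega,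
        show ((n - 2 : ℕ) : ℚ) = (n : ℚ) - 2 from by
          rw [Nat.cast_sub (by omega)]; norm_num,
        show ((n - 1 : ℕ) : ℚ) = (n : ℚ) - 1 from by
          rw [Nat.cast_sub (by omega)]; norm_num,
        vecV, if_neg (by omega), if_neg (by omega), if_pos hl]
      ring
    · intro j hj
      simp only [Finset.mem_insert, Finset.mem_singleton, Fin.ext_iff] at hj
      push_neg at hj
      exact hM0 i j (by omega) (by omega) (by omega) (by omega)
end

section
/- vᵀ M⁻¹ v = −(n + 8). (In the paper's notation this is the value c² = ⟨x, rot⟩ = −7 − t₀ used in the d₃-invariant formula d₃ = (1/4)(c² − 3σ(X) − 2χ(X)) + q, which with σ(X) = −(t₀ − 1), χ(X) = t₀, q = 3 gives d₃ = 1/2.) -/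
open Matrix

/-- Explicit inverse of `linkM`. -/
def invB (n : ℕ) : Matrix (Fin n) (Fin n) ℚ :=
  Matrix.of fun i j =>
    if (i : ℕ) ≤ 1 ∧ (j : ℕ) ≤ 1 then (if (i : ℕ) = (j : ℕ) then -1 else 0)
    else if (i : ℕ) ≤ 1 then (-1) ^ (j : ℕ)
    else if (j : ℕ) ≤ 1 then (-1) ^ (i : ℕ)
    else (-1) ^ ((i : ℕ) + (j : ℕ) + 1) * (((min (i : ℕ) (j : ℕ) : ℕ) : ℚ) + 1)

lemma linkM_apply {n : ℕ} (i j : Fin n) : linkM n i j =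
    if (i : ℕ) = (j : ℕ) then (if (i : ℕ) = n - 1 then -1 else -2)
    else if (i : ℕ) + 1 = (j : ℕ) ∨ (j : ℕ) + 1 = (i : ℕ) then -1
    else if ((i : ℕ) = 0 ∧ (j : ℕ) = 2) ∨ ((i : ℕ) = 2 ∧ (j : ℕ) = 0) then -1
    else 0 := by
  simp [linkM, Fin.ext_iff]

lemma sum_sing {n : ℕ} (a : ℕ) (ha : a < n) (p : ℚ) :
    (∑ k : Fin n, if (k : ℕ) = a then p else 0) = p := by
  rw [show (fun k : Fin n => if (k:ℕ) = a then p else 0)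
      = fun k => if k = ⟨a, ha⟩ then p else 0 from funext fun k => by simp [Fin.ext_iff]]
  simp

lemma sum4 {n : ℕ} (f : Fin n → ℚ) (a b c d : ℕ) (ha : a < n) (hb : b < n) (hc : c < n)
    (hd : d < n) (p q r s : ℚ)
    (h : ∀ k : Fin n, f k = (if (k:ℕ) = a then p else 0) + (if (k:ℕ) = b then q else 0)
      + (if (k:ℕ) = c then r else 0) + (if (k:ℕ) = d then s else 0)) :
    ∑ k, f k = p + q + r + s := by
  simp only [h, Finset.sum_add_distrib, sum_sing _ ha, sum_sing _ hb, sum_sing _ hc, sum_sing _ hd]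

/-- Row 0 of `linkM`: entries -2, -1, -1 at columns 0,1,2. -/
lemma row0 {n : ℕ} (hn : 4 ≤ n) (x : Fin n → ℚ) (i : Fin n) (hi : (i : ℕ) = 0) :
    ∑ k, linkM n i k * x k =
      -2 * x ⟨0, by omega⟩ + -(x ⟨1, by omega⟩) + -(x ⟨2, by omega⟩) + 0 := by
  apply sum4 _ 0 1 2 0 (by omega) (by omega) (by omega) (by omega)
  intro k
  by_cases h0 : (k : ℕ) = 0
  · have hM : linkM n i k = -2 := by
      rw [linkM_apply]; split_ifs <;> first | (exfalso; omega) | norm_num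
    have hx : x k = x ⟨0, by omega⟩ := congrArg x (Fin.ext (by simp [h0]))
    rw [hM, hx]; simp only [h0]; norm_num
  by_cases h1 : (k : ℕ) = 1
  · have hM : linkM n i k = -1 := by
      rw [linkM_apply]; split_ifs <;> first | (exfalso; omega) | norm_num
    have hx : x k = x ⟨1, by omega⟩ := congrArg x (Fin.ext (by simp [h1]))
    rw [hM, hx]; simp only [h1]; norm_num
  by_cases h2 : (k : ℕ) = 2
  · have hM : linkM n i k = -1 := by
      rw [linkM_apply]; split_ifs <;> first | (exfalso; omega) | norm_num
    have hx : x k = x ⟨2, by omega⟩ := congrArg x (Fin.ext (by simp [h2]))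
    rw [hM, hx]; simp only [h2]; norm_num
  · have hM : linkM n i k = 0 := by
      rw [linkM_apply]; split_ifs <;> first | (exfalso; omega) | norm_num
    rw [hM]; simp only [if_neg h0, if_neg h1, if_neg h2]; norm_num

lemma row1 {n : ℕ} (hn : 4 ≤ n) (x : Fin n → ℚ) (i : Fin n) (hi : (i : ℕ) = 1) :
    ∑ k, linkM n i k * x k =
      -(x ⟨0, by omega⟩) + -2 * x ⟨1, by omega⟩ + -(x ⟨2, by omega⟩) + 0 := by
  apply sum4 _ 0 1 2 0 (by omega) (by omega) (by omega) (by omega)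
  intro k
  by_cases h0 : (k : ℕ) = 0
  · have hM : linkM n i k = -1 := by
      rw [linkM_apply]; split_ifs <;> first | (exfalso; omega) | norm_num
    have hx : x k = x ⟨0, by omega⟩ := congrArg x (Fin.ext (by simp [h0]))
    rw [hM, hx]; first | ring1 | (split_ifs <;> first | (exfalso; omega) | ring1)
  by_cases h1 : (k : ℕ) = 1
  · have hM : linkM n i k = -2 := by
      rw [linkM_apply]; split_ifs <;> first | (exfalso; omega) | norm_num
    have hx : x k = x ⟨1, by omega⟩ := congrArg x (Fin.ext (by simp [h1]))
    rw [hM, hx]; first | ring1 | (split_ifs <;> first | (exfalso; omega) | ring1)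
  by_cases h2 : (k : ℕ) = 2
  · have hM : linkM n i k = -1 := by
      rw [linkM_apply]; split_ifs <;> first | (exfalso; omega) | norm_num
    have hx : x k = x ⟨2, by omega⟩ := congrArg x (Fin.ext (by simp [h2]))
    rw [hM, hx]; first | ring1 | (split_ifs <;> first | (exfalso; omega) | ring1)
  · have hM : linkM n i k = 0 := by
      rw [linkM_apply]; split_ifs <;> first | (exfalso; omega) | norm_num
    rw [hM]; simp only [if_neg h0, if_neg h1, if_neg h2]
    first | ring1 | (split_ifs <;> first | (exfalso; omega) | ring1)

lemma row2 {n : ℕ} (hn : 4 ≤ n) (x : Fin n → ℚ) (i : Fin n) (hi : (i : ℕ) = 2) :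
    ∑ k, linkM n i k * x k =
      -(x ⟨0, by omega⟩) + -(x ⟨1, by omega⟩) + -2 * x ⟨2, by omega⟩ + -(x ⟨3, by omega⟩) := by
  apply sum4 _ 0 1 2 3 (by omega) (by omega) (by omega) (by omega)
  intro k
  by_cases h0 : (k : ℕ) = 0
  · have hM : linkM n i k = -1 := by
      rw [linkM_apply]; split_ifs <;> first | (exfalso; omega) | norm_num
    have hx : x k = x ⟨0, by omega⟩ := congrArg x (Fin.ext (by simp [h0]))
    rw [hM, hx]; first | ring1 | (split_ifs <;> first | (exfalso; omega) | ring1)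
  by_cases h1 : (k : ℕ) = 1
  · have hM : linkM n i k = -1 := by
      rw [linkM_apply]; split_ifs <;> first | (exfalso; omega) | norm_num
    have hx : x k = x ⟨1, by omega⟩ := congrArg x (Fin.ext (by simp [h1]))
    rw [hM, hx]; first | ring1 | (split_ifs <;> first | (exfalso; omega) | ring1)
  by_cases h2 : (k : ℕ) = 2
  · have hM : linkM n i k = -2 := by
      rw [linkM_apply]; split_ifs <;> first | (exfalso; omega) | norm_num
    have hx : x k = x ⟨2, by omega⟩ := congrArg x (Fin.ext (by simp [h2]))
    rw [hM, hx]; first | ring1 | (split_ifs <;> first | (exfalso; omega) | ring1)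
  by_cases h3 : (k : ℕ) = 3
  · have hM : linkM n i k = -1 := by
      rw [linkM_apply]; split_ifs <;> first | (exfalso; omega) | norm_num
    have hx : x k = x ⟨3, by omega⟩ := congrArg x (Fin.ext (by simp [h3]))
    rw [hM, hx]; first | ring1 | (split_ifs <;> first | (exfalso; omega) | ring1)
  · have hM : linkM n i k = 0 := by
      rw [linkM_apply]; split_ifs <;> first | (exfalso; omega) | norm_num
    rw [hM]; simp only [if_neg h0, if_neg h1, if_neg h2, if_neg h3]
    first | ring1 | (split_ifs <;> first | (exfalso; omega) | ring1)

lemma rowlast {n : ℕ} (hn : 4 ≤ n) (x : Fin n → ℚ) (i : Fin n) (hi : (i : ℕ) = n - 1) :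
    ∑ k, linkM n i k * x k =
      -(x ⟨n - 2, by omega⟩) + -(x ⟨n - 1, by omega⟩) + 0 + 0 := by
  apply sum4 _ (n-2) (n-1) 0 0 (by omega) (by omega) (by omega) (by omega)
  intro k
  by_cases h0 : (k : ℕ) = n - 2
  · have hM : linkM n i k = -1 := by
      rw [linkM_apply]; split_ifs <;> first | (exfalso; omega) | norm_num
    have hx : x k = x ⟨n - 2, by omega⟩ := congrArg x (Fin.ext (by simp [h0]))
    rw [hM, hx]; first | ring1 | (split_ifs <;> first | (exfalso; omega) | ring1)
  by_cases h1 : (k : ℕ) = n - 1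
  · have hM : linkM n i k = -1 := by
      rw [linkM_apply]; split_ifs <;> first | (exfalso; omega) | norm_num
    have hx : x k = x ⟨n - 1, by omega⟩ := congrArg x (Fin.ext (by simp [h1]))
    rw [hM, hx]; first | ring1 | (split_ifs <;> first | (exfalso; omega) | ring1)
  · have hM : linkM n i k = 0 := by
      rw [linkM_apply]; split_ifs <;> first | (exfalso; omega) | norm_num
    rw [hM]; simp only [if_neg h0, if_neg h1]
    first | ring1 | (split_ifs <;> first | (exfalso; omega) | ring1)

lemma rowmid {n : ℕ} (hn : 4 ≤ n) (x : Fin n → ℚ) (i : Fin n) (h3 : 3 ≤ (i : ℕ))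
    (hup : (i : ℕ) ≤ n - 2) :
    ∑ k, linkM n i k * x k =
      -(x ⟨(i : ℕ) - 1, by omega⟩) + -2 * x ⟨(i : ℕ), i.isLt⟩ + -(x ⟨(i : ℕ) + 1, by omega⟩) + 0 := by
  apply sum4 _ ((i:ℕ)-1) (i:ℕ) ((i:ℕ)+1) ((i:ℕ)-1) (by omega) (by omega) (by omega) (by omega)
  intro k
  by_cases h0 : (k : ℕ) = (i : ℕ) - 1
  · have hM : linkM n i k = -1 := by
      rw [linkM_apply]; split_ifs <;> first | (exfalso; omega) | norm_num
    have hx : x k = x ⟨(i : ℕ) - 1, by omega⟩ := congrArg x (Fin.ext (by simp [h0]))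
    rw [hM, hx]; first | ring1 | (split_ifs <;> first | (exfalso; omega) | ring1)
  by_cases h1 : (k : ℕ) = (i : ℕ)
  · have hM : linkM n i k = -2 := by
      rw [linkM_apply]; split_ifs <;> first | (exfalso; omega) | norm_num
    have hx : x k = x ⟨(i : ℕ), by omega⟩ := congrArg x (Fin.ext (by simp [h1]))
    rw [hM, hx]; first | ring1 | (split_ifs <;> first | (exfalso; omega) | ring1)
  by_cases h2 : (k : ℕ) = (i : ℕ) + 1
  · have hM : linkM n i k = -1 := by
      rw [linkM_apply]; split_ifs <;> first | (exfalso; omega) | norm_num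
    have hx : x k = x ⟨(i : ℕ) + 1, by omega⟩ := congrArg x (Fin.ext (by simp [h2]))
    rw [hM, hx]; first | ring1 | (split_ifs <;> first | (exfalso; omega) | ring1)
  · have hM : linkM n i k = 0 := by
      rw [linkM_apply]; split_ifs <;> first | (exfalso; omega) | norm_num
    rw [hM]; simp only [if_neg h0, if_neg h1, if_neg h2]
    first | ring1 | (split_ifs <;> first | (exfalso; omega) | ring1)

set_option maxHeartbeats 2000000 in
lemma key (n : ℕ) (hn : 4 ≤ n) : linkM n * invB n = 1 := by
  ext i j
  rw [Matrix.mul_apply]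
  have R1 : (i : ℕ) = (j : ℕ) → (1 : Matrix (Fin n) (Fin n) ℚ) i j = 1 := fun hij => by
    rw [show i = j from Fin.ext hij]; exact Matrix.one_apply_eq j
  have R0 : (i : ℕ) ≠ (j : ℕ) → (1 : Matrix (Fin n) (Fin n) ℚ) i j = 0 := fun hij =>
    Matrix.one_apply_ne (Fin.ne_of_val_ne hij)
  by_cases hi0 : (i : ℕ) = 0
  · rw [row0 hn _ i hi0]
    by_cases hj1 : (j : ℕ) ≤ 1
    · rcases Nat.lt_or_ge (j : ℕ) 1 with hj0 | hj0
      · rw [R1 (by omega)]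
        simp only [invB, Matrix.of_apply, Fin.val_mk]
        split_ifs <;> first | (exfalso; omega) | norm_num
      · rw [R0 (by omega)]
        simp only [invB, Matrix.of_apply, Fin.val_mk]
        split_ifs <;> first | (exfalso; omega) | norm_num
    · rw [R0 (by omega)]
      simp only [invB, Matrix.of_apply, Fin.val_mk]
      split_ifs <;> try (exfalso; omega)
      rw [show min 2 (j : ℕ) = 2 from by omega,
        show 2 + (j : ℕ) + 1 = (j : ℕ) + 3 from by omega]
      push_cast
      ring1
  by_cases hi1 : (i : ℕ) = 1
  · rw [row1 hn _ i hi1]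
    by_cases hj1 : (j : ℕ) ≤ 1
    · rcases Nat.lt_or_ge (j : ℕ) 1 with hj0 | hj0
      · rw [R0 (by omega)]
        simp only [invB, Matrix.of_apply, Fin.val_mk]
        split_ifs <;> first | (exfalso; omega) | norm_num
      · rw [R1 (by omega)]
        simp only [invB, Matrix.of_apply, Fin.val_mk]
        split_ifs <;> first | (exfalso; omega) | norm_num
    · rw [R0 (by omega)]
      simp only [invB, Matrix.of_apply, Fin.val_mk]
      split_ifs <;> try (exfalso; omega)
      rw [show min 2 (j : ℕ) = 2 from by omega,
        show 2 + (j : ℕ) + 1 = (j : ℕ) + 3 from by omega]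
      push_cast
      ring1
  by_cases hi2 : (i : ℕ) = 2
  · rw [row2 hn _ i hi2]
    by_cases hj1 : (j : ℕ) ≤ 1
    · rw [R0 (by omega)]
      simp only [invB, Matrix.of_apply, Fin.val_mk]
      split_ifs <;> first | (exfalso; omega) | norm_num
    · by_cases hj2 : (j : ℕ) = 2
      · rw [R1 (by omega)]
        simp only [invB, Matrix.of_apply, Fin.val_mk]
        split_ifs <;> try (exfalso; omega)
        rw [hj2]
        norm_num
      · rw [R0 (by omega)]
        simp only [invB, Matrix.of_apply, Fin.val_mk]
        split_ifs <;> try (exfalso; omega)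
        rw [show min 2 (j : ℕ) = 2 from by omega,
          show min 3 (j : ℕ) = 3 from by omega,
          show 2 + (j : ℕ) + 1 = (j : ℕ) + 3 from by omega,
          show 3 + (j : ℕ) + 1 = (j : ℕ) + 4 from by omega]
        push_cast
        ring1
  by_cases hilast : (i : ℕ) = n - 1
  · rw [rowlast hn _ i hilast]
    obtain ⟨m, hm⟩ : ∃ m, n = m + 2 := ⟨n - 2, by omega⟩
    by_cases hj1 : (j : ℕ) ≤ 1
    · rw [R0 (by omega)]
      simp only [invB, Matrix.of_apply, Fin.val_mk]
      split_ifs <;> try (exfalso; omega)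
      rw [show n - 2 = m from by omega, show n - 1 = m + 1 from by omega]
      ring1
    · by_cases hjlast : (j : ℕ) = n - 1
      · rw [R1 (by omega)]
        simp only [invB, Matrix.of_apply, Fin.val_mk]
        split_ifs <;> try (exfalso; omega)
        rw [show min (n - 2) (j : ℕ) = m from by omega,
          show min (n - 1) (j : ℕ) = m + 1 from by omega,
          show n - 2 + (j : ℕ) + 1 = 2 * (m + 1) from by omega,
          show n - 1 + (j : ℕ) + 1 = 2 * (m + 1) + 1 from by omega,
          pow_succ, pow_mul]
        push_cast
        try ring_nf
        try norm_num
        try ring1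
        try linarith
      · rw [R0 (by omega)]
        simp only [invB, Matrix.of_apply, Fin.val_mk]
        split_ifs <;> try (exfalso; omega)
        rw [show min (n - 1) (j : ℕ) = min (n - 2) (j : ℕ) from by omega,
          show n - 2 + (j : ℕ) + 1 = m + (j : ℕ) + 1 from by omega,
          show n - 1 + (j : ℕ) + 1 = m + (j : ℕ) + 1 + 1 from by omega,
          pow_succ]
        ring1
  -- middle rows
  · have h3 : 3 ≤ (i : ℕ) := by omega
    have hup : (i : ℕ) ≤ n - 2 := by omega
    rw [rowmid hn _ i h3 hup]
    obtain ⟨p, hp⟩ : ∃ p, (i : ℕ) = p + 3 := ⟨(i : ℕ) - 3, by omega⟩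
    by_cases hj1 : (j : ℕ) ≤ 1
    · rw [R0 (by omega)]
      simp only [invB, Matrix.of_apply, Fin.val_mk]
      split_ifs <;> try (exfalso; omega)
      rw [show (i : ℕ) - 1 = p + 2 from by omega, show (i : ℕ) + 1 = p + 4 from by omega, hp]
      ring1
    · by_cases hja : (j : ℕ) ≤ p + 2
      · rw [R0 (by omega)]
        simp only [invB, Matrix.of_apply, Fin.val_mk]
        split_ifs <;> try (exfalso; omega)
        rw [show min ((i : ℕ) - 1) (j : ℕ) = (j : ℕ) from by omega,
          show min (i : ℕ) (j : ℕ) = (j : ℕ) from by omega,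
          show min ((i : ℕ) + 1) (j : ℕ) = (j : ℕ) from by omega,
          show (i : ℕ) - 1 + (j : ℕ) + 1 = p + (j : ℕ) + 3 from by omega,
          show (i : ℕ) + (j : ℕ) + 1 = p + (j : ℕ) + 3 + 1 from by omega,
          show (i : ℕ) + 1 + (j : ℕ) + 1 = p + (j : ℕ) + 3 + 1 + 1 from by omega,
          pow_succ, pow_succ]
        ring1
      · by_cases hjb : (j : ℕ) = p + 3
        · rw [R1 (by omega)]
          simp only [invB, Matrix.of_apply, Fin.val_mk]
          split_ifs <;> try (exfalso; omega)
          rw [show min ((i : ℕ) - 1) (j : ℕ) = p + 2 from by omega,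
            show min (i : ℕ) (j : ℕ) = p + 3 from by omega,
            show min ((i : ℕ) + 1) (j : ℕ) = p + 3 from by omega,
            show (i : ℕ) - 1 + (j : ℕ) + 1 = 2 * (p + 3) from by omega,
            show (i : ℕ) + (j : ℕ) + 1 = 2 * (p + 3) + 1 from by omega,
            show (i : ℕ) + 1 + (j : ℕ) + 1 = 2 * (p + 3) + 1 + 1 from by omega,
            pow_succ, pow_succ, pow_mul]
          push_cast
          try ring_nf
          try norm_num
          try ring1
          try linarith
        · by_cases hjc : (j : ℕ) = p + 4
          · rw [R0 (by omega)]
            simp only [invB, Matrix.of_apply, Fin.val_mk]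
            split_ifs <;> try (exfalso; omega)
            rw [show min ((i : ℕ) - 1) (j : ℕ) = p + 2 from by omega,
              show min (i : ℕ) (j : ℕ) = p + 3 from by omega,
              show min ((i : ℕ) + 1) (j : ℕ) = p + 4 from by omega,
              show (i : ℕ) - 1 + (j : ℕ) + 1 = 2 * (p + 3) + 1 from by omega,
              show (i : ℕ) + (j : ℕ) + 1 = 2 * (p + 3) + 1 + 1 from by omega,
              show (i : ℕ) + 1 + (j : ℕ) + 1 = 2 * (p + 3) + 1 + 1 + 1 from by omega,
              pow_succ, pow_succ, pow_succ, pow_mul]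
            push_cast
            try ring_nf
            try norm_num
            try ring1
            try linarith
          · rw [R0 (by omega)]
            simp only [invB, Matrix.of_apply, Fin.val_mk]
            split_ifs <;> try (exfalso; omega)
            rw [show min ((i : ℕ) - 1) (j : ℕ) = p + 2 from by omega,
              show min (i : ℕ) (j : ℕ) = p + 3 from by omega,
              show min ((i : ℕ) + 1) (j : ℕ) = p + 4 from by omega,
              show (i : ℕ) - 1 + (j : ℕ) + 1 = p + (j : ℕ) + 3 from by omega,
              show (i : ℕ) + (j : ℕ) + 1 = p + (j : ℕ) + 3 + 1 from by omega,
              show (i : ℕ) + 1 + (j : ℕ) + 1 = p + (j : ℕ) + 3 + 1 + 1 from by omega,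
              pow_succ, pow_succ]
            push_cast
            ring1

lemma dot_sparse {n : ℕ} (hn : 4 ≤ n) (g : Fin n → ℚ) :
    (∑ k, vecV n k * g k)
      = 2 * g ⟨0, by omega⟩ + -2 * g ⟨1, by omega⟩ + g ⟨n - 1, by omega⟩ + 0 := by
  apply sum4 _ 0 1 (n - 1) 0 (by omega) (by omega) (by omega) (by omega)
  intro k
  by_cases h0 : (k : ℕ) = 0
  · have hx : g k = g ⟨0, by omega⟩ := congrArg g (Fin.ext (by simp [h0]))
    have hv : vecV n k = 2 := by simp [vecV, h0]
    rw [hv, hx]; split_ifs <;> first | (exfalso; omega) | ring1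
  by_cases h1 : (k : ℕ) = 1
  · have hx : g k = g ⟨1, by omega⟩ := congrArg g (Fin.ext (by simp [h1]))
    have hv : vecV n k = -2 := by simp [vecV, h0, h1]
    rw [hv, hx]; split_ifs <;> first | (exfalso; omega) | ring1
  by_cases h2 : (k : ℕ) = n - 1
  · have hx : g k = g ⟨n - 1, by omega⟩ := congrArg g (Fin.ext (by simp [h2]))
    have hv : vecV n k = 1 := by
      simp only [vecV]; rw [if_neg h0, if_neg h1, if_pos h2]
    rw [hv, hx]; split_ifs <;> first | (exfalso; omega) | ring1
  · have hv : vecV n k = 0 := by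
      simp only [vecV]; rw [if_neg h0, if_neg h1, if_neg h2]
    rw [hv]; split_ifs <;> first | (exfalso; omega) | ring1

set_option maxHeartbeats 2000000 in
/-- `vᵀ M⁻¹ v = -(n + 8)`; this is the value `c²` in the d₃-invariant computation. -/
theorem stmt_6 (n : ℕ) (hn : 4 ≤ n) :
    vecV n ⬝ᵥ (linkM n)⁻¹.mulVec (vecV n) = -((n : ℚ) + 8) := by
  have hInv : (linkM n)⁻¹ = invB n := Matrix.inv_eq_right_inv (key n hn)
  rw [hInv]
  have hmv : ∀ a : Fin n, (invB n).mulVec (vecV n) a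
      = 2 * invB n a ⟨0, by omega⟩ + -2 * invB n a ⟨1, by omega⟩
        + invB n a ⟨n - 1, by omega⟩ + 0 := by
    intro a
    have : (invB n).mulVec (vecV n) a = ∑ k, vecV n k * invB n a k := by
      simp only [Matrix.mulVec, dotProduct]
      exact Finset.sum_congr rfl fun k _ => mul_comm _ _
    rw [this, dot_sparse hn (fun k => invB n a k)]
  have houter : vecV n ⬝ᵥ (invB n).mulVec (vecV n)
      = ∑ k, vecV n k * (invB n).mulVec (vecV n) k := rfl
  rw [houter, dot_sparse hn _, hmv, hmv, hmv]
  have Ecorner : ∀ (a b : ℕ) (h : a < n) (h' : b < n), a ≤ 1 → b ≤ 1 →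
      invB n ⟨a, h⟩ ⟨b, h'⟩ = if a = b then -1 else 0 := by
    intro a b h h' ha hb
    simp only [invB, Matrix.of_apply, Fin.val_mk]
    rw [if_pos ⟨ha, hb⟩]
  have Etop : ∀ (a : ℕ) (h : a < n) (h' : n - 1 < n), a ≤ 1 →
      invB n ⟨a, h⟩ ⟨n - 1, h'⟩ = (-1) ^ (n - 1) := by
    intro a h h' ha
    simp only [invB, Matrix.of_apply, Fin.val_mk]
    rw [if_neg (by omega), if_pos ha]
  have Eleft : ∀ (b : ℕ) (h : n - 1 < n) (h' : b < n), b ≤ 1 →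
      invB n ⟨n - 1, h⟩ ⟨b, h'⟩ = (-1) ^ (n - 1) := by
    intro b h h' hb
    simp only [invB, Matrix.of_apply, Fin.val_mk]
    rw [if_neg (by omega), if_neg (by omega), if_pos hb]
  have ELL : ∀ (h h' : n - 1 < n), invB n ⟨n - 1, h⟩ ⟨n - 1, h'⟩ = -(n : ℚ) := by
    intro h h'
    simp only [invB, Matrix.of_apply, Fin.val_mk]
    rw [if_neg (by omega), if_neg (by omega), if_neg (by omega), Nat.min_self,
      show n - 1 + (n - 1) + 1 = 2 * (n - 1) + 1 from by omega, pow_succ, pow_mul,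
      Nat.cast_sub (show 1 ≤ n from by omega)]
    norm_num
  rw [Ecorner 0 0 (by omega) (by omega) (by omega) (by omega),
    Ecorner 0 1 (by omega) (by omega) (by omega) (by omega),
    Etop 0 (by omega) (by omega) (by omega),
    Ecorner 1 0 (by omega) (by omega) (by omega) (by omega),
    Ecorner 1 1 (by omega) (by omega) (by omega) (by omega),
    Etop 1 (by omega) (by omega) (by omega),
    Eleft 0 (by omega) (by omega) (by omega),
    Eleft 1 (by omega) (by omega) (by omega),
    ELL (by omega) (by omega)]
  norm_num
  ring1
end

section
/- The vector y ∈ ℚⁿ defined by y₁ = y₂ = (−1)^n, y_k = (−1)^{n−k} · k for 3 ≤ k ≤ n−1, and yₙ = n + 1, satisfies M y = b. (Equivalently, the solution y = M⁻¹ b has first two entries equal to (−1)^{t₀−1} and last entry equal to t₀ = n + 1, as asserted in Section 6 of the paper.) -/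
open Matrix Finset

/-- The solution vector `y`: `y₁ = y₂ = (-1)^n`, `yₖ = (-1)^(n-k) * k` for `3 ≤ k ≤ n-1`,
and `yₙ = n + 1` (paper indexing `k = i + 1`). -/
def vecY (n : ℕ) : Fin n → ℚ := fun i =>
  if (i : ℕ) = 0 ∨ (i : ℕ) = 1 then (-1 : ℚ) ^ n
  else if (i : ℕ) = n - 1 then (n : ℚ) + 1
  else (-1 : ℚ) ^ (n - ((i : ℕ) + 1)) * ((i : ℕ) + 1)

def mN (n i j : ℕ) : ℚ :=
  if i = j then (if i = n - 1 then -1 else -2)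
  else if i + 1 = j ∨ j + 1 = i then -1
  else if (i = 0 ∧ j = 2) ∨ (i = 2 ∧ j = 0) then -1
  else 0

def yN (n j : ℕ) : ℚ :=
  if j = 0 ∨ j = 1 then (-1 : ℚ) ^ n
  else if j = n - 1 then (n : ℚ) + 1
  else (-1 : ℚ) ^ (n - (j + 1)) * (j + 1)

lemma mN_split (n i j : ℕ) : mN n i j =
    (if j = i then (if i = n-1 then (-1:ℚ) else -2) else 0)
    + (if j = i+1 then -1 else 0)
    + (if j+1 = i then -1 else 0)
    + (if (i=0 ∧ j=2) ∨ (i=2 ∧ j=0) then -1 else 0) := by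
  unfold mN
  split_ifs <;> first | rfl | norm_num <;> omega

lemma key_s7 (n k : ℕ) (h : k ≤ n) : (-1:ℚ)^(n-k) = (-1)^n * (-1)^k := by
  have h1 : (-1:ℚ)^(n-k) * (-1)^k = (-1)^n := by
    rw [← pow_add, Nat.sub_add_cancel h]
  have h2 : ((-1:ℚ)^k) * ((-1)^k) = 1 := by
    rw [← mul_pow]; norm_num
  calc (-1:ℚ)^(n-k) = (-1:ℚ)^(n-k) * (((-1:ℚ)^k) * ((-1)^k)) := by rw [h2, mul_one]
    _ = ((-1:ℚ)^(n-k) * (-1)^k) * (-1)^k := by ring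
    _ = (-1:ℚ)^n * (-1)^k := by rw [h1]

lemma hsum (n : ℕ) (hn : 4 ≤ n) (i : ℕ) (hi : i < n) :
    ∑ j ∈ Finset.range n, mN n i j * yN n j =
      (if i = n-1 then (-1:ℚ) else -2) * yN n i
      + (if i+1 < n then -yN n (i+1) else 0)
      + (∑ j ∈ Finset.range n, (if j+1 = i then (-1:ℚ) else 0) * yN n j)
      + (if i = 0 then -yN n 2 else if i = 2 then -yN n 0 else 0) := by
  simp only [mN_split, add_mul, Finset.sum_add_distrib, ite_mul, zero_mul]
  congr 1
  congr 1
  congr 1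
  · rw [Finset.sum_ite_eq' (Finset.range n) i]
    simp [Finset.mem_range.mpr hi]
  · rw [Finset.sum_ite_eq' (Finset.range n) (i+1)]
    simp [Finset.mem_range]
  · by_cases h0 : i = 0
    · subst h0
      rw [Finset.sum_congr rfl (fun j _ => (by split_ifs <;> simp_all :
          (if (0=0 ∧ j=2) ∨ (0=2 ∧ j=0) then (-1:ℚ) * yN n j else 0)
          = if j = 2 then -1 * yN n j else 0))]
      rw [Finset.sum_ite_eq' (Finset.range n) 2]
      simp [Finset.mem_range.mpr (by omega : 2 < n)]
    · by_cases h2 : i = 2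
      · subst h2
        rw [Finset.sum_congr rfl (fun j _ => (by split_ifs <;> simp_all :
            (if (2=0 ∧ j=2) ∨ (2=2 ∧ j=0) then (-1:ℚ) * yN n j else 0)
            = if j = 0 then -1 * yN n j else 0))]
        rw [Finset.sum_ite_eq' (Finset.range n) 0]
        simp [Finset.mem_range.mpr (by omega : 0 < n)]
      · rw [Finset.sum_congr rfl (fun j _ => (by split_ifs <;> simp_all :
            (if (i=0 ∧ j=2) ∨ (i=2 ∧ j=0) then (-1:ℚ) * yN n j else 0) = 0))]
        simp [h0, h2]

lemma s3_zero (n : ℕ) :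
    ∑ j ∈ Finset.range n, (if j+1 = 0 then (-1:ℚ) else 0) * yN n j = 0 := by
  apply Finset.sum_eq_zero; intro j _; simp

lemma s3_succ (n k : ℕ) (hk : k < n) :
    ∑ j ∈ Finset.range n, (if j+1 = k+1 then (-1:ℚ) else 0) * yN n j = -yN n k := by
  rw [Finset.sum_congr rfl (fun j _ => (by split_ifs <;> simp_all :
      (if j+1 = k+1 then (-1:ℚ) else 0) * yN n j = if j = k then -1 * yN n j else 0))]
  rw [Finset.sum_ite_eq' (Finset.range n) k]
  simp [Finset.mem_range.mpr hk]

lemma row (n : ℕ) (hn : 4 ≤ n) (i : ℕ) (hi : i < n) :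
    ∑ j ∈ Finset.range n, mN n i j * yN n j =
      (if i = n - 2 then -1 else if i = n - 1 then -2 else 0) := by
  rw [hsum n hn i hi]
  match i, hi with
  | 0, _ =>
    rw [s3_zero]
    simp only [yN]
    norm_num
    split_ifs <;> first
      | (exfalso; omega)
      | ((try push_cast); (try norm_num); (try ring); done)
      | ((try simp only [Nat.add_assoc, Nat.add_sub_add_left]); (try push_cast); (try norm_num); (try ring); done)
      | ((have h4 : n = 4 := by omega); subst h4; (try push_cast); (try norm_num); (try ring); done)
      | (simp (disch := omega) only [key_s7, pow_add]; (try push_cast); (try norm_num); (try ring); done)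
      | (simp (disch := omega) only [key_s7]; (try push_cast); (try norm_num); (try ring); done)
  | 1, _ =>
    rw [s3_succ n 0 (by omega)]
    simp only [yN]
    norm_num
    split_ifs <;> first
      | (exfalso; omega)
      | ((try push_cast); (try norm_num); (try ring); done)
      | ((try simp only [Nat.add_assoc, Nat.add_sub_add_left]); (try push_cast); (try norm_num); (try ring); done)
      | ((have h4 : n = 4 := by omega); subst h4; (try push_cast); (try norm_num); (try ring); done)
      | (simp (disch := omega) only [key_s7, pow_add]; (try push_cast); (try norm_num); (try ring); done)
      | (simp (disch := omega) only [key_s7]; (try push_cast); (try norm_num); (try ring); done)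
  | 2, _ =>
    rw [s3_succ n 1 (by omega)]
    simp only [yN]
    norm_num
    split_ifs <;> first
      | (exfalso; omega)
      | ((try push_cast); (try norm_num); (try ring); done)
      | ((try simp only [Nat.add_assoc, Nat.add_sub_add_left]); (try push_cast); (try norm_num); (try ring); done)
      | ((have h4 : n = 4 := by omega); subst h4; (try push_cast); (try norm_num); (try ring); done)
      | (simp (disch := omega) only [key_s7, pow_add]; (try push_cast); (try norm_num); (try ring); done)
      | (simp (disch := omega) only [key_s7]; (try push_cast); (try norm_num); (try ring); done)
  | (k+3), _ =>
    rw [s3_succ n (k+2) (by omega)]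
    by_cases hlast : k + 3 = n - 1
    · have hn' : n = k + 4 := by omega
      subst hn'
      simp only [yN]
      norm_num
      split_ifs <;> first
        | (exfalso; omega)
        | ((try push_cast); (try norm_num); (try ring); done)
        | ((try simp only [Nat.add_assoc, Nat.add_sub_add_left]); (try push_cast); (try norm_num); (try ring); done)
        | (simp (disch := omega) only [key_s7, pow_add]; (try push_cast); (try norm_num); (try ring); done)
        | (simp (disch := omega) only [key_s7]; (try push_cast); (try norm_num); (try ring); done)
    · by_cases hpen : k + 3 = n - 2
      · have hn' : n = k + 5 := by omega
        subst hn'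
        simp only [yN]
        norm_num
        split_ifs <;> first
          | (exfalso; omega)
          | ((try push_cast); (try norm_num); (try ring); done)
          | ((try simp only [Nat.add_assoc, Nat.add_sub_add_left]); (try push_cast); (try norm_num); (try ring); done)
          | (simp (disch := omega) only [key_s7, pow_add]; (try push_cast); (try norm_num); (try ring); done)
          | (simp (disch := omega) only [key_s7]; (try push_cast); (try norm_num); (try ring); done)
      · simp only [yN]
        norm_num
        split_ifs <;> first
          | (exfalso; omega)
          | ((try push_cast); (try norm_num); (try ring); done)
          | ((try simp only [Nat.add_assoc, Nat.add_sub_add_left]); (try push_cast); (try norm_num); (try ring); done)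
          | (simp (disch := omega) only [key_s7, pow_add]; (try push_cast); (try norm_num); (try ring); done)
          | (simp (disch := omega) only [key_s7]; (try push_cast); (try norm_num); (try ring); done)

/-- The vector `y` satisfies `M y = b`. -/
theorem stmt_7 (n : ℕ) (hn : 4 ≤ n) :
    (linkM n).mulVec (vecY n) = vecB n := by
  funext i
  have e1 : ∀ j : Fin n, linkM n i j * vecY n j = mN n i.val j.val * yN n j.val := by
    intro j
    have h : linkM n i j = mN n i.val j.val := by
      simp only [linkM, mN, Matrix.of_apply, ← Fin.val_eq_val]
    rw [h]; rfl
  show ∑ j, linkM n i j * vecY n j = vecB n i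
  rw [Finset.sum_congr rfl (fun j _ => e1 j)]
  rw [Fin.sum_univ_eq_sum_range (fun j => mN n i.val j * yN n j) n]
  rw [row n hn i.val i.isLt]
  rfl
end

section
/- vᵀ M⁻¹ b = n + 1. (In the paper's notation ⟨rot, M⁻¹ lk⟩ = t₀, so the rotation number of K₀ after surgery is r₀ = 1 − ⟨rot, M⁻¹ lk⟩ = −(t₀ − 1).) -/
open Matrix

/-- extension of a vector on `Fin n` to `ℕ` by zero -/
def extv (n : ℕ) (y : Fin n → ℚ) (m : ℕ) : ℚ := if h : m < n then y ⟨m, h⟩ else 0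

lemma extv_zero (n : ℕ) (y : Fin n → ℚ) (m : ℕ) (h : n ≤ m) : extv n y m = 0 :=
  dif_neg (by omega)

lemma sum_ind (n m : ℕ) (c : ℚ) (y : Fin n → ℚ) :
    (∑ j : Fin n, (if (j : ℕ) = m then c else 0) * y j) = c * extv n y m := by
  unfold extv
  split_ifs with h
  · rw [Finset.sum_eq_single (⟨m, h⟩ : Fin n)]
    · simp
    · intro b _ hb
      have : (b : ℕ) ≠ m := fun e => hb (Fin.ext e)
      simp [this]
    · simp
  · rw [mul_zero]
    apply Finset.sum_eq_zero
    intro j _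
    have : (j : ℕ) ≠ m := by omega
    rw [if_neg this, zero_mul]

lemma sum_ind' (n m : ℕ) (c d : ℚ) (y : Fin n → ℚ) :
    (∑ j : Fin n, c * (if (j : ℕ) = m then d else 0) * y j) = c * (d * extv n y m) := by
  rw [← sum_ind n m d y, Finset.mul_sum]
  exact Finset.sum_congr rfl fun j _ => by ring
set_option maxHeartbeats 2000000 in
lemma entry_decomp (n : ℕ) (hn : 4 ≤ n) (i j : Fin n) :
    linkM n i j =
      (if (j : ℕ) = (i : ℕ) then (if (i : ℕ) = n - 1 then (-1 : ℚ) else -2) else 0)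
      + (if (i : ℕ) = 0 then (0 : ℚ) else 1) * (if (j : ℕ) = (i : ℕ) - 1 then -1 else 0)
      + (if (j : ℕ) = (i : ℕ) + 1 then (-1 : ℚ) else 0)
      + (if (i : ℕ) = 0 then (1 : ℚ) else 0) * (if (j : ℕ) = 2 then (-1 : ℚ) else 0)
      + (if (i : ℕ) = 2 then (1 : ℚ) else 0) * (if (j : ℕ) = 0 then (-1 : ℚ) else 0) := by
  have hij : (i = j) ↔ ((i : ℕ) = (j : ℕ)) := Fin.ext_iff
  simp only [linkM, Matrix.of_apply, hij]
  have hi := i.isLt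
  have hj := j.isLt
  split_ifs <;> first | (exfalso; omega) | norm_num

lemma row_eval (n : ℕ) (hn : 4 ≤ n) (y : Fin n → ℚ) (i : ℕ) (hi : i < n) :
    (linkM n).mulVec y ⟨i, hi⟩ =
      (if i = n - 1 then (-1 : ℚ) else -2) * extv n y i
      + (if i = 0 then (0 : ℚ) else 1) * (-1 * extv n y (i - 1))
      + (-1 * extv n y (i + 1))
      + (if i = 0 then (1 : ℚ) else 0) * (-1 * extv n y 2)
      + (if i = 2 then (1 : ℚ) else 0) * (-1 * extv n y 0) := by
  have key : ∀ j : Fin n, linkM n ⟨i, hi⟩ j * y j =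
      (if (j : ℕ) = i then (if i = n - 1 then (-1 : ℚ) else -2) else 0) * y j
      + (if i = 0 then (0 : ℚ) else 1) * (if (j : ℕ) = i - 1 then (-1 : ℚ) else 0) * y j
      + (if (j : ℕ) = i + 1 then (-1 : ℚ) else 0) * y j
      + (if i = 0 then (1 : ℚ) else 0) * (if (j : ℕ) = 2 then (-1 : ℚ) else 0) * y j
      + (if i = 2 then (1 : ℚ) else 0) * (if (j : ℕ) = 0 then (-1 : ℚ) else 0) * y j := by
    intro j
    rw [entry_decomp n hn ⟨i, hi⟩ j]
    push_cast [Fin.val_mk]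
    ring
  show (∑ j : Fin n, linkM n ⟨i, hi⟩ j * y j) = _
  rw [Finset.sum_congr rfl fun j _ => key j]
  rw [Finset.sum_add_distrib, Finset.sum_add_distrib, Finset.sum_add_distrib,
    Finset.sum_add_distrib]
  rw [sum_ind n i _ y, sum_ind' n (i-1) _ (-1) y, sum_ind n (i+1) (-1) y,
    sum_ind' n 2 _ (-1) y, sum_ind' n 0 _ (-1) y]

/-- the explicit solution of `M x = b` -/
def xval (n k : ℕ) : ℚ :=
  if n ≤ k then 0
  else if k ≤ 1 then (-1) ^ n
  else if k = n - 1 then (n : ℚ) + 1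
  else (-1) ^ (n + k + 1) * ((k : ℚ) + 1)

lemma extv_xval (n m : ℕ) : extv n (fun i : Fin n => xval n i) m = xval n m := by
  unfold extv
  split_ifs with h
  · rfl
  · rw [xval, if_pos (by omega)]


lemma xval_le_one (n k : ℕ) (hn : 4 ≤ n) (hk : k ≤ 1) : xval n k = (-1) ^ n := by
  unfold xval; rw [if_neg (by omega), if_pos hk]

lemma xval_mid (n k : ℕ) (hn : 4 ≤ n) (h2 : 2 ≤ k) (h : k ≤ n - 2) :
    xval n k = (-1) ^ (n + k + 1) * ((k : ℚ) + 1) := by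
  unfold xval; rw [if_neg (by omega), if_neg (by omega), if_neg (by omega)]

lemma xval_pred (n : ℕ) (hn : 4 ≤ n) : xval n (n - 1) = (n : ℚ) + 1 := by
  unfold xval; rw [if_neg (by omega), if_neg (by omega), if_pos rfl]

lemma xval_top (n k : ℕ) (h : n ≤ k) : xval n k = 0 := by
  unfold xval; rw [if_pos h]

lemma hMx (n : ℕ) (hn : 4 ≤ n) :
    (linkM n).mulVec (fun i : Fin n => xval n i) = vecB n := by
  funext i
  rcases i with ⟨i, hi⟩
  rw [row_eval n hn _ i hi]
  simp only [extv_xval]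
  show _ = (if i = n - 2 then (-1 : ℚ) else if i = n - 1 then -2 else 0)
  by_cases h0 : i = 0
  · subst h0
    rw [xval_le_one n 0 hn (by omega), xval_le_one n 1 hn (by omega),
      xval_mid n 2 hn (by omega) (by omega)]
    have f1 : ¬(0 : ℕ) = n - 1 := by omega
    have f2 : ¬(0 : ℕ) = n - 2 := by omega
    simp only [if_neg f1, if_neg f2, if_pos rfl, if_neg (show ¬(0:ℕ) = 2 by omega)]
    push_cast
    ring
  by_cases h1 : i = 1
  · subst h1
    rw [xval_le_one n 1 hn (by omega), xval_le_one n 0 hn (by omega),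
      xval_mid n 2 hn (by omega) (by omega)]
    have f1 : ¬(1 : ℕ) = n - 1 := by omega
    have f2 : ¬(1 : ℕ) = n - 2 := by omega
    simp only [if_neg f1, if_neg f2, if_neg (show ¬(1:ℕ) = 0 by omega),
      if_neg (show ¬(1:ℕ) = 2 by omega)]
    norm_num
    ring
  by_cases h2 : i = 2
  · subst h2
    by_cases hn4 : n = 4
    · subst hn4
      norm_num [xval]
    · -- n ≥ 5
      rw [xval_le_one n 1 hn (by omega), xval_le_one n 0 hn (by omega),
        xval_mid n 2 hn (by omega) (by omega), xval_mid n 3 hn (by omega) (by omega)]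
      have f1 : ¬(2 : ℕ) = n - 1 := by omega
      have f2 : ¬(2 : ℕ) = n - 2 := by omega
      simp only [if_neg f1, if_neg f2, if_neg (show ¬(2:ℕ) = 0 by omega), if_pos rfl]
      push_cast
      ring
  -- now 3 ≤ i
  have h3 : 3 ≤ i := by omega
  by_cases hlast : i = n - 1
  · subst hlast
    obtain ⟨m, rfl⟩ : ∃ m, n = m + 4 := ⟨n - 4, by omega⟩
    rw [show m + 4 - 1 = m + 3 from by omega, show m + 4 - 2 = m + 2 from by omega]
    rw [show m + 3 - 1 = m + 2 from by omega, show m + 3 + 1 = m + 4 from by omega]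
    have e1 : xval (m + 4) (m + 3) = (m : ℚ) + 4 + 1 := by
      have := xval_pred (m + 4) (by omega)
      rw [show m + 4 - 1 = m + 3 from by omega] at this
      rw [this]; push_cast; ring
    have e2 : xval (m + 4) (m + 2) = -((m : ℚ) + 2 + 1) := by
      rw [xval_mid (m + 4) (m + 2) (by omega) (by omega) (by omega),
        Odd.neg_one_pow ⟨m + 3, by ring⟩]
      push_cast; ring
    rw [e1, e2, xval_top (m + 4) (m + 4) le_rfl]
    have c0 : ¬m + 3 = 0 := by omega
    have c2 : ¬m + 3 = 2 := by omega
    have c3 : ¬m + 3 = m + 2 := by omega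
    simp only [if_neg c0, if_neg c2, if_neg c3, if_pos rfl]
    push_cast; ring
  by_cases hpen : i = n - 2
  · subst hpen
    obtain ⟨m, rfl⟩ : ∃ m, n = m + 5 := ⟨n - 5, by omega⟩
    rw [show m + 5 - 2 = m + 3 from by omega, show m + 5 - 1 = m + 4 from by omega]
    rw [show m + 3 - 1 = m + 2 from by omega, show m + 3 + 1 = m + 4 from by omega]
    have e1 : xval (m + 5) (m + 3) = -((m : ℚ) + 3 + 1) := by
      rw [xval_mid (m + 5) (m + 3) (by omega) (by omega) (by omega),
        Odd.neg_one_pow ⟨m + 4, by ring⟩]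
      push_cast; ring
    have e2 : xval (m + 5) (m + 2) = (m : ℚ) + 2 + 1 := by
      rw [xval_mid (m + 5) (m + 2) (by omega) (by omega) (by omega),
        Even.neg_one_pow ⟨m + 4, by ring⟩]
      push_cast; ring
    have e3 : xval (m + 5) (m + 4) = (m : ℚ) + 5 + 1 := by
      have := xval_pred (m + 5) (by omega)
      rw [show m + 5 - 1 = m + 4 from by omega] at this
      rw [this]; push_cast; ring
    rw [e1, e2, e3]
    have c0 : ¬m + 3 = 0 := by omega
    have c2 : ¬m + 3 = 2 := by omega
    have c4 : ¬m + 3 = m + 4 := by omega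
    have eZ : xval (m + 5) 2 = xval (m + 5) 2 := rfl
    simp only [if_neg c0, if_neg c2, if_neg c4, if_pos rfl]
    push_cast; ring
  · -- generic interior row: 3 ≤ i ≤ n - 3
    obtain ⟨j, rfl⟩ : ∃ j, i = j + 3 := ⟨i - 3, by omega⟩
    rw [show j + 3 - 1 = j + 2 from by omega, show j + 3 + 1 = j + 4 from by omega]
    rw [xval_mid n (j + 2) hn (by omega) (by omega),
      xval_mid n (j + 3) hn (by omega) (by omega),
      xval_mid n (j + 4) hn (by omega) (by omega)]
    have c0 : ¬j + 3 = 0 := by omega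
    have c2 : ¬j + 3 = 2 := by omega
    have cn1 : ¬j + 3 = n - 1 := by omega
    have cn2 : ¬j + 3 = n - 2 := by omega
    simp only [if_neg c0, if_neg c2, if_neg cn1, if_neg cn2]
    push_cast
    ring

lemma kerM (n : ℕ) (hn : 4 ≤ n) (y : Fin n → ℚ)
    (h : (linkM n).mulVec y = 0) : y = 0 := by
  set Y := extv n y with hY
  have E : ∀ i : ℕ, ∀ hi : i < n,
      (if i = n - 1 then (-1 : ℚ) else -2) * Y i
      + (if i = 0 then (0 : ℚ) else 1) * (-1 * Y (i - 1))
      + (-1 * Y (i + 1))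
      + (if i = 0 then (1 : ℚ) else 0) * (-1 * Y 2)
      + (if i = 2 then (1 : ℚ) else 0) * (-1 * Y 0) = 0 := by
    intro i hi
    rw [← row_eval n hn y i hi]
    rw [h]
    rfl
  have E0 : -2 * Y 0 - Y 1 - Y 2 = 0 := by
    have := E 0 (by omega)
    rw [if_neg (show ¬(0 = n - 1) by omega), if_pos rfl] at this
    simp only [if_pos rfl, if_neg (show ¬(0 = 2) by omega)] at this
    norm_num at this
    linarith
  have E1 : -2 * Y 1 - Y 0 - Y 2 = 0 := by
    have := E 1 (by omega)
    rw [if_neg (show ¬(1 = n - 1) by omega)] at this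
    simp only [if_neg (show ¬(1 = 0) by omega), if_neg (show ¬(1 = 2) by omega)] at this
    norm_num at this
    linarith
  have hY1 : Y 1 = Y 0 := by linarith
  have hY2 : Y 2 = -3 * Y 0 := by linarith
  have hY3 : Y 3 = 4 * Y 0 := by
    have := E 2 (by omega)
    rw [if_neg (show ¬(2 = n - 1) by omega)] at this
    simp only [if_neg (show ¬(2 = 0) by omega), if_pos rfl] at this
    norm_num at this
    linarith
  have key : ∀ k, 2 ≤ k → k ≤ n - 1 → Y k = (-1) ^ (k + 1) * ((k : ℚ) + 1) * Y 0 := by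
    intro k
    induction k using Nat.strong_induction_on with
    | _ k IH =>
      intro hk2 hkn
      by_cases h2 : k = 2
      · subst h2; rw [hY2]; norm_num
      by_cases h3 : k = 3
      · subst h3; rw [hY3]; norm_num
      obtain ⟨j, rfl⟩ : ∃ j, k = j + 4 := ⟨k - 4, by omega⟩
      have e := E (j + 3) (by omega)
      rw [if_neg (show ¬(j + 3 = n - 1) by omega)] at e
      simp only [if_neg (show ¬(j + 3 = 0) by omega),
        if_neg (show ¬(j + 3 = 2) by omega)] at e
      rw [show j + 3 - 1 = j + 2 from by omega, show j + 3 + 1 = j + 4 from by omega] at e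
      rw [IH (j + 3) (by omega) (by omega) (by omega),
        IH (j + 2) (by omega) (by omega) (by omega)] at e
      push_cast at e ⊢
      linear_combination -e
  have hY0 : Y 0 = 0 := by
    obtain ⟨m, rfl⟩ : ∃ m, n = m + 4 := ⟨n - 4, by omega⟩
    have e := E (m + 3) (by omega)
    rw [if_pos (show m + 3 = m + 4 - 1 by omega)] at e
    simp only [if_neg (show ¬(m + 3 = 0) by omega),
      if_neg (show ¬(m + 3 = 2) by omega)] at e
    rw [show m + 3 - 1 = m + 2 from by omega, show m + 3 + 1 = m + 4 from by omega] at e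
    rw [key (m + 3) (by omega) (by omega), key (m + 2) (by omega) (by omega)] at e
    rw [show Y (m + 4) = 0 from extv_zero _ _ _ le_rfl] at e
    have h' : (-1 : ℚ) ^ m * Y 0 = 0 := by
      push_cast at e
      linear_combination -e
    rcases mul_eq_zero.mp h' with h'' | h''
    · exact absurd h'' (pow_ne_zero m (by norm_num))
    · exact h''
  funext i
  show y i = 0
  have hyi : y i = Y (i : ℕ) := by
    rw [hY]; unfold extv; rw [dif_pos i.isLt]
  rw [hyi]
  by_cases c0 : (i : ℕ) = 0
  · rw [c0, hY0]
  by_cases c1 : (i : ℕ) = 1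
  · rw [c1, hY1, hY0]
  · rw [key (i : ℕ) (by omega) (by have := i.isLt; omega), hY0, mul_zero]

lemma dotV (n : ℕ) (hn : 4 ≤ n) :
    vecV n ⬝ᵥ (fun i : Fin n => xval n i) = (n : ℚ) + 1 := by
  have decomp : ∀ j : Fin n, vecV n j =
      (if (j : ℕ) = 0 then (2 : ℚ) else 0) + (if (j : ℕ) = 1 then (-2 : ℚ) else 0)
      + (if (j : ℕ) = n - 1 then (1 : ℚ) else 0) := by
    intro j
    unfold vecV
    split_ifs <;> first | (exfalso; omega) | norm_num
  show (∑ j : Fin n, vecV n j * xval n (j : ℕ)) = _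
  rw [Finset.sum_congr rfl fun j _ => by rw [decomp j, add_mul, add_mul]]
  rw [Finset.sum_add_distrib, Finset.sum_add_distrib]
  rw [sum_ind n 0 2 _, sum_ind n 1 (-2) _, sum_ind n (n - 1) 1 _]
  simp only [extv_xval]
  rw [xval_le_one n 0 hn (by omega), xval_le_one n 1 hn (by omega), xval_pred n hn]
  ring


/-- `vᵀ M⁻¹ b = n + 1`, so the rotation number of `K₀` after surgery is `-(t₀ - 1)`. -/
theorem stmt_8 (n : ℕ) (hn : 4 ≤ n) :
    vecV n ⬝ᵥ (linkM n)⁻¹.mulVec (vecB n) = (n : ℚ) + 1 := by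
  have hdet : (linkM n).det ≠ 0 := by
    intro h0
    obtain ⟨y, hy0, hy⟩ := (Matrix.exists_mulVec_eq_zero_iff).mpr h0
    exact hy0 (kerM n hn y hy)
  have hinv : (linkM n)⁻¹.mulVec (vecB n) = fun i : Fin n => xval n (i : ℕ) := by
    rw [← hMx n hn, Matrix.mulVec_mulVec, Matrix.nonsing_inv_mul _ (isUnit_iff_ne_zero.mpr hdet), Matrix.one_mulVec]
  rw [hinv]
  exact dotV n hn
end

section
/- vᵀ M⁻¹ u = 4 + (−1)^{n+1}. (Since the linking-number vector of K₁ is lk = (−1)^{t₀} u with t₀ = n + 1, this gives ⟨rot, M⁻¹ lk⟩ = 4(−1)^{t₀} + 1, so the rotation number of K₁ after surgery is r₁ = 2(−1)^{t₀} − ⟨rot, M⁻¹ lk⟩, which equals 1 if t₀ is odd and −3 if t₀ is even, as computed in Section 6 of the paper.) -/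
open Matrix

/-- The vector `u` with `u₁ = 1`, `u₂ = 3`, `u₃ = 1` (paper indexing), all other entries `0`. -/
def vecU1 (n : ℕ) : Fin n → ℚ := fun i =>
  if (i : ℕ) = 0 then 1 else if (i : ℕ) = 1 then 3 else if (i : ℕ) = 2 then 1 else 0

lemma sum_ite_nat {n : ℕ} (a : ℕ) (ha : a < n) (f : Fin n → ℚ) :
    (∑ j : Fin n, if (j : ℕ) = a then f j else 0) = f ⟨a, ha⟩ := by
  calc (∑ j : Fin n, if (j : ℕ) = a then f j else 0)
      = ∑ j : Fin n, if j = ⟨a, ha⟩ then f j else 0 :=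
        Finset.sum_congr rfl (fun j _ => by
          by_cases h : (j : ℕ) = a
          · rw [if_pos h, if_pos (Fin.ext h)]
          · rw [if_neg h, if_neg (fun hh => h (by rw [hh]))])
    _ = f ⟨a, ha⟩ := Fintype.sum_ite_eq' _ f

lemma linkM_decomp {n : ℕ} (j k : Fin n) :
    linkM n j k =
      (if (j : ℕ) = (k : ℕ) then -2 else 0)
      + (if (j : ℕ) = (k : ℕ) ∧ (k : ℕ) = n - 1 then 1 else 0)
      + (if (j : ℕ) + 1 = (k : ℕ) then -1 else 0)
      + (if (k : ℕ) + 1 = (j : ℕ) then -1 else 0)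
      + (if (j : ℕ) = 0 ∧ (k : ℕ) = 2 then -1 else 0)
      + (if (j : ℕ) = 2 ∧ (k : ℕ) = 0 then -1 else 0) := by
  simp only [linkM, of_apply, Fin.ext_iff]
  split_ifs <;> first | (exfalso; omega) | norm_num

/-- Entries of the inverse of `linkM`, as a function of natural-number indices. -/
noncomputable def Nf (i j : ℕ) : ℚ :=
  if i ≤ 1 ∧ j ≤ 1 then (if i = j then -1 else 0)
  else if i ≤ 1 ∨ j ≤ 1 then (-1) ^ (max i j)
  else (-1) ^ (i + j + 1) * ((min i j + 1 : ℕ) : ℚ)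

noncomputable def invN (n : ℕ) : Matrix (Fin n) (Fin n) ℚ :=
  Matrix.of fun i j => Nf (i : ℕ) (j : ℕ)

lemma Nf_small {i j : ℕ} (hi : i ≤ 1) (hj : j ≤ 1) :
    Nf i j = if i = j then -1 else 0 := by
  unfold Nf; rw [if_pos ⟨hi, hj⟩]

lemma Nf_top {i j : ℕ} (hi : i ≤ 1) (hj : 2 ≤ j) : Nf i j = (-1) ^ j := by
  unfold Nf
  rw [if_neg (by omega), if_pos (Or.inl hi), Nat.max_eq_right (by omega)]

lemma Nf_left {i j : ℕ} (hi : 2 ≤ i) (hj : j ≤ 1) : Nf i j = (-1) ^ i := by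
  unfold Nf
  rw [if_neg (by omega), if_pos (Or.inr hj), Nat.max_eq_left (by omega)]

lemma Nf_big {i j : ℕ} (hi : 2 ≤ i) (hj : 2 ≤ j) :
    Nf i j = (-1) ^ (i + j + 1) * ((min i j + 1 : ℕ) : ℚ) := by
  unfold Nf
  rw [if_neg (by omega), if_neg (by omega)]

/-- The row formula for `invN * linkM`. -/
lemma NM_apply {n : ℕ} (hn : 4 ≤ n) (i k : Fin n) :
    (invN n * linkM n) i k =
      -2 * Nf i k
      + (if (k : ℕ) = n - 1 then Nf i k else 0)
      - (if 1 ≤ (k : ℕ) then Nf i ((k : ℕ) - 1) else 0)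
      - (if (k : ℕ) + 1 ≤ n - 1 then Nf i ((k : ℕ) + 1) else 0)
      - (if (k : ℕ) = 2 then Nf i 0 else 0)
      - (if (k : ℕ) = 0 then Nf i 2 else 0) := by
  have e1 : (∑ j : Fin n, Nf i j * (if (j : ℕ) = (k : ℕ) then (-2 : ℚ) else 0))
      = -2 * Nf i k := by
    simp only [mul_ite, mul_zero]
    rw [sum_ite_nat (k : ℕ) k.isLt (fun j => Nf i j * -2)]
    ring
  have e2 : (∑ j : Fin n, Nf i j * (if (j : ℕ) = (k : ℕ) ∧ (k : ℕ) = n - 1 then (1 : ℚ) else 0))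
      = if (k : ℕ) = n - 1 then Nf i k else 0 := by
    by_cases hk : (k : ℕ) = n - 1
    · rw [if_pos hk]
      simp only [hk, and_true, mul_ite, mul_one, mul_zero]
      have := sum_ite_nat (n - 1) (by omega : n - 1 < n) (fun j => Nf i j)
      rw [show (⟨n-1, by omega⟩ : Fin n) = k from Fin.ext hk.symm] at this
      rw [← hk] at this ⊢
      exact this
    · rw [if_neg hk]
      exact Finset.sum_eq_zero fun j _ => by
        rw [if_neg (fun h => hk h.2), mul_zero]
  have e3 : (∑ j : Fin n, Nf i j * (if (j : ℕ) + 1 = (k : ℕ) then (-1 : ℚ) else 0))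
      = -(if 1 ≤ (k : ℕ) then Nf i ((k : ℕ) - 1) else 0) := by
    by_cases hk : 1 ≤ (k : ℕ)
    · rw [if_pos hk]
      have hc : ∀ j : Fin n, ((j : ℕ) + 1 = (k : ℕ)) ↔ ((j : ℕ) = (k : ℕ) - 1) := by
        intro j; omega
      calc (∑ j : Fin n, Nf i j * (if (j : ℕ) + 1 = (k : ℕ) then (-1 : ℚ) else 0))
          = ∑ j : Fin n, (if (j : ℕ) = (k : ℕ) - 1 then Nf i j * -1 else 0) :=
            Finset.sum_congr rfl fun j _ => by
              rw [mul_ite, mul_zero, if_congr (hc j) rfl rfl]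
        _ = -(Nf i ((k : ℕ) - 1)) := by
            rw [sum_ite_nat ((k : ℕ) - 1) (by omega : (k : ℕ) - 1 < n)
              (fun j => Nf i j * -1)]
            ring
    · rw [if_neg hk]
      simp only [neg_zero]
      exact Finset.sum_eq_zero fun j _ => by
        rw [if_neg (by omega), mul_zero]
  have e4 : (∑ j : Fin n, Nf i j * (if (k : ℕ) + 1 = (j : ℕ) then (-1 : ℚ) else 0))
      = -(if (k : ℕ) + 1 ≤ n - 1 then Nf i ((k : ℕ) + 1) else 0) := by
    by_cases hk : (k : ℕ) + 1 ≤ n - 1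
    · rw [if_pos hk]
      calc (∑ j : Fin n, Nf i j * (if (k : ℕ) + 1 = (j : ℕ) then (-1 : ℚ) else 0))
          = ∑ j : Fin n, (if (j : ℕ) = (k : ℕ) + 1 then Nf i j * -1 else 0) :=
            Finset.sum_congr rfl fun j _ => by
              rw [mul_ite, mul_zero, if_congr eq_comm rfl rfl]
        _ = -(Nf i ((k : ℕ) + 1)) := by
            rw [sum_ite_nat ((k : ℕ) + 1) (by omega : (k : ℕ) + 1 < n)
              (fun j => Nf i j * -1)]
            ring
    · rw [if_neg hk]
      simp only [neg_zero]
      exact Finset.sum_eq_zero fun j _ => by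
        have hjn : (j : ℕ) < n := j.isLt
        have hkn : (k : ℕ) < n := k.isLt
        rw [if_neg (by omega), mul_zero]
  have e5 : (∑ j : Fin n, Nf i j * (if (j : ℕ) = 0 ∧ (k : ℕ) = 2 then (-1 : ℚ) else 0))
      = -(if (k : ℕ) = 2 then Nf i 0 else 0) := by
    by_cases hk : (k : ℕ) = 2
    · rw [if_pos hk]
      calc (∑ j : Fin n, Nf i j * (if (j : ℕ) = 0 ∧ (k : ℕ) = 2 then (-1 : ℚ) else 0))
          = ∑ j : Fin n, (if (j : ℕ) = 0 then Nf i j * -1 else 0) :=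
            Finset.sum_congr rfl fun j _ => by
              rw [mul_ite, mul_zero,
                if_congr ⟨fun h => h.1, fun h => ⟨h, hk⟩⟩ rfl rfl]
        _ = -(Nf i 0) := by
            rw [sum_ite_nat 0 (by omega : 0 < n) (fun j => Nf i j * -1)]
            ring
    · rw [if_neg hk]
      simp only [neg_zero]
      exact Finset.sum_eq_zero fun j _ => by
        rw [if_neg (fun h => hk h.2), mul_zero]
  have e6 : (∑ j : Fin n, Nf i j * (if (j : ℕ) = 2 ∧ (k : ℕ) = 0 then (-1 : ℚ) else 0))
      = -(if (k : ℕ) = 0 then Nf i 2 else 0) := by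
    by_cases hk : (k : ℕ) = 0
    · rw [if_pos hk]
      calc (∑ j : Fin n, Nf i j * (if (j : ℕ) = 2 ∧ (k : ℕ) = 0 then (-1 : ℚ) else 0))
          = ∑ j : Fin n, (if (j : ℕ) = 2 then Nf i j * -1 else 0) :=
            Finset.sum_congr rfl fun j _ => by
              rw [mul_ite, mul_zero,
                if_congr ⟨fun h => h.1, fun h => ⟨h, hk⟩⟩ rfl rfl]
        _ = -(Nf i 2) := by
            rw [sum_ite_nat 2 (by omega : 2 < n) (fun j => Nf i j * -1)]
            ring
    · rw [if_neg hk]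
      simp only [neg_zero]
      exact Finset.sum_eq_zero fun j _ => by
        rw [if_neg (fun h => hk h.2), mul_zero]
  calc (invN n * linkM n) i k
      = ∑ j : Fin n,
          (Nf i j * (if (j : ℕ) = (k : ℕ) then (-2 : ℚ) else 0)
          + Nf i j * (if (j : ℕ) = (k : ℕ) ∧ (k : ℕ) = n - 1 then (1 : ℚ) else 0)
          + Nf i j * (if (j : ℕ) + 1 = (k : ℕ) then (-1 : ℚ) else 0)
          + Nf i j * (if (k : ℕ) + 1 = (j : ℕ) then (-1 : ℚ) else 0)
          + Nf i j * (if (j : ℕ) = 0 ∧ (k : ℕ) = 2 then (-1 : ℚ) else 0)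
          + Nf i j * (if (j : ℕ) = 2 ∧ (k : ℕ) = 0 then (-1 : ℚ) else 0)) := by
        rw [mul_apply]
        exact Finset.sum_congr rfl fun j _ => by
          show Nf i j * linkM n j k = _
          rw [linkM_decomp j k]; ring
    _ = _ := by
        rw [Finset.sum_add_distrib, Finset.sum_add_distrib, Finset.sum_add_distrib,
            Finset.sum_add_distrib, Finset.sum_add_distrib, e1, e2, e3, e4, e5, e6]
        ring

lemma pow_two_mul (q : ℕ) : ((-1 : ℚ)) ^ (2 * q) = 1 := by
  rw [pow_mul]; norm_num

lemma key_s10 (n i k : ℕ) (hn : 4 ≤ n) (hi : i < n) (hk : k < n) :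
    -2 * Nf i k
      + (if k = n - 1 then Nf i k else 0)
      - (if 1 ≤ k then Nf i (k - 1) else 0)
      - (if k + 1 ≤ n - 1 then Nf i (k + 1) else 0)
      - (if k = 2 then Nf i 0 else 0)
      - (if k = 0 then Nf i 2 else 0)
      = if i = k then 1 else 0 := by
  by_cases hk0 : k = 0
  · subst hk0
    rw [if_neg (by omega), if_neg (by omega), if_pos (by omega), if_neg (by omega),
      if_pos rfl]
    by_cases hi1 : i ≤ 1
    · interval_cases i <;> norm_num [Nf]
    · have h2 : 2 ≤ i := by omega
      rw [if_neg (by omega), Nf_left h2 (by norm_num), Nf_left h2 (by norm_num),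
        Nf_big h2 (by norm_num), Nat.min_eq_right h2]
      simp only [pow_add]
      push_cast
      ring
  by_cases hk1 : k = 1
  · subst hk1
    rw [if_neg (by omega), if_pos (by omega), if_pos (by omega), if_neg (by omega),
      if_neg (by omega)]
    by_cases hi1 : i ≤ 1
    · interval_cases i <;> norm_num [Nf]
    · have h2 : 2 ≤ i := by omega
      rw [if_neg (by omega), show (1 : ℕ) - 1 = 0 from rfl,
        Nf_left h2 (by norm_num), Nf_left h2 (by norm_num),
        Nf_big h2 (by norm_num), Nat.min_eq_right (by omega : 1 + 1 ≤ i)]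
      simp only [pow_add]
      push_cast
      ring
  by_cases hk2 : k = 2
  · subst hk2
    rw [if_neg (by omega), if_pos (by omega), if_pos (by omega), if_pos rfl,
      if_neg (by omega)]
    by_cases hi2 : i ≤ 2
    · interval_cases i <;> norm_num [Nf]
    · have h3 : 3 ≤ i := by omega
      rw [if_neg (by omega), show (2 : ℕ) - 1 = 1 from rfl,
        Nf_big (by omega) (by norm_num), Nat.min_eq_right (by omega : 2 ≤ i),
        Nf_left (by omega) (by norm_num),
        Nf_big (by omega) (by norm_num), Nat.min_eq_right (by omega : 2 + 1 ≤ i),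
        Nf_left (by omega) (by norm_num)]
      simp only [pow_add]
      push_cast
      ring
  by_cases hkl : k = n - 1
  · obtain ⟨p, rfl⟩ : ∃ p, n = p + 4 := ⟨n - 4, by omega⟩
    have hk' : k = p + 3 := by omega
    subst hk'
    rw [if_pos (by omega), if_pos (by omega), if_neg (by omega), if_neg (by omega),
      if_neg (by omega), show p + 3 - 1 = p + 2 by omega]
    by_cases hi1 : i ≤ 1
    · rw [if_neg (by omega), Nf_top hi1 (by omega), Nf_top hi1 (by omega)]
      simp only [pow_add]
      ring
    · have h2 : 2 ≤ i := by omega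
      by_cases hia : i ≤ p + 1
      · rw [if_neg (by omega), Nf_big h2 (by omega), Nf_big h2 (by omega),
          Nat.min_eq_left (by omega : i ≤ p + 3), Nat.min_eq_left (by omega : i ≤ p + 2)]
        simp only [pow_add]
        push_cast
        ring
      by_cases hib : i = p + 2
      · subst hib
        rw [if_neg (by omega), Nf_big h2 (by omega), Nf_big h2 (by omega),
          Nat.min_eq_left (by omega : p + 2 ≤ p + 3), Nat.min_eq_left (le_refl (p + 2)),
          show p + 2 + (p + 3) + 1 = 2 * (p + 3) by ring,
          show p + 2 + (p + 2) + 1 = 2 * (p + 2) + 1 by ring]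
        simp only [pow_succ, pow_two_mul]
        push_cast
        ring
      · have hic : i = p + 3 := by omega
        subst hic
        rw [if_pos rfl, Nf_big h2 (by omega), Nf_big h2 (by omega),
          Nat.min_eq_left (le_refl (p + 3)), Nat.min_eq_right (by omega : p + 2 ≤ p + 3),
          show p + 3 + (p + 3) + 1 = 2 * (p + 3) + 1 by ring,
          show p + 3 + (p + 2) + 1 = 2 * (p + 3) by ring]
        simp only [pow_succ, pow_two_mul]
        push_cast
        ring
  · -- generic k : 3 ≤ k ≤ n - 2
    have hk3 : 3 ≤ k := by omega
    obtain ⟨m, rfl⟩ : ∃ m, k = m + 1 := ⟨k - 1, by omega⟩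
    have hm2 : 2 ≤ m := by omega
    rw [if_neg (by omega), if_pos (by omega), if_pos (by omega), if_neg (by omega),
      if_neg (by omega), show m + 1 - 1 = m from rfl]
    by_cases hi1 : i ≤ 1
    · rw [if_neg (by omega), Nf_top hi1 (by omega), Nf_top hi1 (by omega),
        Nf_top hi1 (by omega)]
      simp only [pow_add]
      ring
    · have h2 : 2 ≤ i := by omega
      by_cases hia : i ≤ m
      · rw [if_neg (by omega), Nf_big h2 (by omega), Nf_big h2 (by omega),
          Nf_big h2 (by omega), Nat.min_eq_left (by omega : i ≤ m + 1),
          Nat.min_eq_left hia, Nat.min_eq_left (by omega : i ≤ m + 1 + 1)]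
        simp only [pow_add]
        push_cast
        ring
      by_cases hib : i = m + 1
      · subst hib
        rw [if_pos rfl, Nf_big h2 (by omega), Nf_big h2 (by omega), Nf_big h2 (by omega),
          Nat.min_eq_left (le_refl (m + 1)), Nat.min_eq_right (by omega : m ≤ m + 1),
          Nat.min_eq_left (by omega : m + 1 ≤ m + 1 + 1),
          show m + 1 + (m + 1) + 1 = 2 * (m + 1) + 1 by ring,
          show m + 1 + m + 1 = 2 * (m + 1) by ring,
          show m + 1 + (m + 1 + 1) + 1 = 2 * (m + 2) by ring]
        simp only [pow_succ, pow_two_mul]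
        push_cast
        ring
      · have hic : m + 2 ≤ i := by omega
        rw [if_neg (by omega), Nf_big h2 (by omega), Nf_big h2 (by omega),
          Nf_big h2 (by omega), Nat.min_eq_right (by omega : m + 1 ≤ i),
          Nat.min_eq_right (by omega : m ≤ i), Nat.min_eq_right (by omega : m + 1 + 1 ≤ i)]
        simp only [pow_add]
        push_cast
        ring

theorem invN_mul_linkM {n : ℕ} (hn : 4 ≤ n) : invN n * linkM n = 1 := by
  ext i k
  rw [NM_apply hn, Matrix.one_apply]
  rw [key_s10 n i k hn i.isLt k.isLt]
  by_cases h : (i : ℕ) = (k : ℕ)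
  · rw [if_pos h, if_pos (Fin.ext h)]
  · rw [if_neg h, if_neg (fun hh => h (by rw [hh]))]

/-- `vᵀ M⁻¹ u = 4 + (-1)^(n+1)`, giving the rotation number of `K₁` after surgery. -/
theorem stmt_10 (n : ℕ) (hn : 4 ≤ n) :
    vecV n ⬝ᵥ (linkM n)⁻¹.mulVec (vecU1 n) = 4 + (-1 : ℚ) ^ (n + 1) := by
  rw [Matrix.inv_eq_left_inv (invN_mul_linkM hn)]
  have hu : ∀ i : Fin n, (invN n).mulVec (vecU1 n) i
      = Nf i 0 + 3 * Nf i 1 + Nf i 2 := by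
    intro i
    rw [mulVec, dotProduct]
    have hpt : ∀ j : Fin n, invN n i j * vecU1 n j =
        (if (j : ℕ) = 0 then Nf i j * 1 else 0)
        + (if (j : ℕ) = 1 then Nf i j * 3 else 0)
        + (if (j : ℕ) = 2 then Nf i j * 1 else 0) := by
      intro j
      show Nf i j * vecU1 n j = _
      unfold vecU1
      split_ifs <;> first | (exfalso; omega) | ring
    rw [Finset.sum_congr rfl fun j _ => hpt j, Finset.sum_add_distrib,
      Finset.sum_add_distrib,
      sum_ite_nat 0 (by omega) (fun j => Nf i j * 1),
      sum_ite_nat 1 (by omega) (fun j => Nf i j * 3),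
      sum_ite_nat 2 (by omega) (fun j => Nf i j * 1)]
    show Nf i ((0 : ℕ)) * 1 + Nf i ((1 : ℕ)) * 3 + Nf i ((2 : ℕ)) * 1 = _
    ring
  have hpt : ∀ i : Fin n, vecV n i * ((invN n).mulVec (vecU1 n) i) =
      (if (i : ℕ) = 0 then (Nf (i : ℕ) 0 + 3 * Nf (i : ℕ) 1 + Nf (i : ℕ) 2) * 2 else 0)
      + (if (i : ℕ) = 1 then (Nf (i : ℕ) 0 + 3 * Nf (i : ℕ) 1 + Nf (i : ℕ) 2) * (-2) else 0)
      + (if (i : ℕ) = n - 1 then (Nf (i : ℕ) 0 + 3 * Nf (i : ℕ) 1 + Nf (i : ℕ) 2) * 1 else 0) := by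
    intro i
    rw [hu i]
    unfold vecV
    split_ifs <;> first | (exfalso; omega) | ring
  rw [dotProduct, Finset.sum_congr rfl fun i _ => hpt i, Finset.sum_add_distrib,
    Finset.sum_add_distrib,
    sum_ite_nat 0 (by omega) (fun i => (Nf (i : ℕ) 0 + 3 * Nf (i : ℕ) 1 + Nf (i : ℕ) 2) * 2),
    sum_ite_nat 1 (by omega) (fun i => (Nf (i : ℕ) 0 + 3 * Nf (i : ℕ) 1 + Nf (i : ℕ) 2) * (-2)),
    sum_ite_nat (n - 1) (by omega) (fun i => (Nf (i : ℕ) 0 + 3 * Nf (i : ℕ) 1 + Nf (i : ℕ) 2) * 1)]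
  show (Nf 0 0 + 3 * Nf 0 1 + Nf 0 2) * 2 + (Nf 1 0 + 3 * Nf 1 1 + Nf 1 2) * (-2)
      + (Nf (n - 1) 0 + 3 * Nf (n - 1) 1 + Nf (n - 1) 2) * 1 = 4 + (-1 : ℚ) ^ (n + 1)
  obtain ⟨p, rfl⟩ : ∃ p, n = p + 4 := ⟨n - 4, by omega⟩
  rw [show p + 4 - 1 = p + 3 by omega,
    Nf_left (i := p + 3) (j := 0) (by omega) (by norm_num),
    Nf_left (i := p + 3) (j := 1) (by omega) (by norm_num),
    Nf_big (i := p + 3) (j := 2) (by omega) (by norm_num),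
    Nat.min_eq_right (by omega : 2 ≤ p + 3),
    show p + 4 + 1 = p + 5 by ring]
  norm_num [Nf]
  simp only [pow_add]
  ring
end

section
/- The vector w ∈ ℚⁿ defined by w₁ = −2, w₂ = 0, and w_k = (−1)^{k+1} for 3 ≤ k ≤ n, satisfies M w = u. (Equivalently, the solution w = M⁻¹ u has first entry −2, second entry 0, and last entry (−1)^{n+1}; after multiplying by the sign (−1)^{t₀} = (−1)^{n+1} this is the vector M⁻¹ lk = (2(−1)^{t₀−1}, 0, *, …, *, 1) displayed in Section 6 of the paper for the component K₂.) -/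
open Matrix

def vecU2 (n : ℕ) : Fin n → ℚ := fun i =>
  if (i : ℕ) = 0 then 3 else if (i : ℕ) = 1 then 1 else if (i : ℕ) = 2 then 1 else 0

def vecW (n : ℕ) : Fin n → ℚ := fun i =>
  if (i : ℕ) = 0 then -2
  else if (i : ℕ) = 1 then 0
  else (-1 : ℚ) ^ (((i : ℕ) + 1) + 1)

/-- The vector `w` satisfies `M w = u`. -/
theorem stmt_11 (n : ℕ) (hn : 4 ≤ n) :
    (linkM n).mulVec (vecW n) = vecU2 n := by
  funext i
  obtain ⟨iv, hi⟩ := i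
  set F : ℕ → ℚ := fun k =>
    (if iv = k then (if iv = n - 1 then -1 else -2)
      else if iv + 1 = k ∨ k + 1 = iv then -1
      else if (iv = 0 ∧ k = 2) ∨ (iv = 2 ∧ k = 0) then -1
      else 0) *
    (if k = 0 then -2 else if k = 1 then 0 else (-1 : ℚ) ^ ((k + 1) + 1)) with hF
  have key : (linkM n).mulVec (vecW n) ⟨iv, hi⟩ = ∑ k ∈ Finset.range n, F k := by
    rw [← Fin.sum_univ_eq_sum_range F n]
    simp only [mulVec, dotProduct]
    refine Finset.sum_congr rfl fun j _ => ?_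
    simp only [linkM, vecW, Matrix.of_apply, Fin.ext_iff, hF]
  rw [key]
  have Fzero : ∀ k, iv ≠ k → ¬(iv + 1 = k ∨ k + 1 = iv) →
      ¬((iv = 0 ∧ k = 2) ∨ (iv = 2 ∧ k = 0)) → F k = 0 := by
    intro k e1 e2 e3
    show (if iv = k then (if iv = n - 1 then -1 else -2)
      else if iv + 1 = k ∨ k + 1 = iv then -1
      else if (iv = 0 ∧ k = 2) ∨ (iv = 2 ∧ k = 0) then (-1:ℚ)
      else 0) * _ = 0
    rw [if_neg e1, if_neg e2, if_neg e3, zero_mul]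
  rcases eq_or_ne iv 0 with h0 | h0
  · have hsub : Finset.range 3 ⊆ Finset.range n := Finset.range_subset_range.mpr (by omega)
    have hz : ∀ k ∈ Finset.range n, k ∉ Finset.range 3 → F k = 0 := by
      intro k _ hk
      simp only [Finset.mem_range, not_lt] at hk
      exact Fzero k (by omega) (by omega) (by omega)
    rw [← Finset.sum_subset hsub hz]
    have hn1 : ¬ (0 : ℕ) = n - 1 := by omega
    simp [Finset.sum_range_succ, hF, h0, hn1, vecU2]
    norm_num
  rcases eq_or_ne iv 1 with h1 | h1
  · have hsub : Finset.range 3 ⊆ Finset.range n := Finset.range_subset_range.mpr (by omega)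
    have hz : ∀ k ∈ Finset.range n, k ∉ Finset.range 3 → F k = 0 := by
      intro k _ hk
      simp only [Finset.mem_range, not_lt] at hk
      exact Fzero k (by omega) (by omega) (by omega)
    rw [← Finset.sum_subset hsub hz]
    have hn1 : ¬ (1 : ℕ) = n - 1 := by omega
    simp [Finset.sum_range_succ, hF, h1, hn1, vecU2]
    norm_num
  rcases eq_or_ne iv 2 with h2 | h2
  · have hsub : Finset.range 4 ⊆ Finset.range n := Finset.range_subset_range.mpr (by omega)
    have hz : ∀ k ∈ Finset.range n, k ∉ Finset.range 4 → F k = 0 := by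
      intro k _ hk
      simp only [Finset.mem_range, not_lt] at hk
      exact Fzero k (by omega) (by omega) (by omega)
    rw [← Finset.sum_subset hsub hz]
    have hn1 : ¬ (2 : ℕ) = n - 1 := by omega
    simp [Finset.sum_range_succ, hF, h2, hn1, vecU2]
    norm_num
  -- now iv ≥ 3
  have h3 : 3 ≤ iv := by omega
  have hu : vecU2 n ⟨iv, hi⟩ = 0 := by
    have e : iv ≠ 0 ∧ iv ≠ 1 ∧ iv ≠ 2 := by omega
    simp [vecU2, e.1, e.2.1, e.2.2]
  rw [hu]
  have f1 : F (iv - 1) = -1 * (-1 : ℚ) ^ (iv + 1) := by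
    have e5 : iv - 1 + 1 + 1 = iv + 1 := by omega
    show (if iv = iv - 1 then (if iv = n - 1 then -1 else -2)
      else if iv + 1 = iv - 1 ∨ iv - 1 + 1 = iv then -1
      else if (iv = 0 ∧ iv - 1 = 2) ∨ (iv = 2 ∧ iv - 1 = 0) then (-1:ℚ)
      else 0) * (if iv - 1 = 0 then -2 else if iv - 1 = 1 then 0
        else (-1 : ℚ) ^ ((iv - 1 + 1) + 1)) = _
    rw [if_neg (by omega), if_pos (by omega), if_neg (by omega), if_neg (by omega), e5]
  rcases eq_or_ne iv (n - 1) with hl | hl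
  · -- last row
    set s : Finset ℕ := {iv - 1, iv} with hs
    have hsub : s ⊆ Finset.range n := by
      intro k hk
      simp only [hs, Finset.mem_insert, Finset.mem_singleton] at hk
      simp only [Finset.mem_range]; omega
    have hz : ∀ k ∈ Finset.range n, k ∉ s → F k = 0 := by
      intro k hk hks
      simp only [Finset.mem_range] at hk
      simp only [hs, Finset.mem_insert, Finset.mem_singleton, not_or] at hks
      exact Fzero k (by omega) (by omega) (by omega)
    rw [← Finset.sum_subset hsub hz]
    rw [hs, Finset.sum_insert (by simp only [Finset.mem_insert, Finset.mem_singleton, not_or]; omega), Finset.sum_singleton]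
    have f2 : F iv = -1 * (-1 : ℚ) ^ (iv + 1 + 1) := by
      show (if iv = iv then (if iv = n - 1 then -1 else -2)
        else if iv + 1 = iv ∨ iv + 1 = iv then -1
        else if (iv = 0 ∧ iv = 2) ∨ (iv = 2 ∧ iv = 0) then (-1:ℚ)
        else 0) * (if iv = 0 then -2 else if iv = 1 then 0
          else (-1 : ℚ) ^ ((iv + 1) + 1)) = _
      rw [if_pos rfl, if_pos hl, if_neg (by omega), if_neg (by omega)]
    rw [f1, f2, pow_succ]
    ring
  · -- middle row, 3 ≤ iv ≤ n - 2
    have hmid : iv + 1 < n := by omega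
    set s : Finset ℕ := {iv - 1, iv, iv + 1} with hs
    have hsub : s ⊆ Finset.range n := by
      intro k hk
      simp only [hs, Finset.mem_insert, Finset.mem_singleton] at hk
      simp only [Finset.mem_range]; omega
    have hz : ∀ k ∈ Finset.range n, k ∉ s → F k = 0 := by
      intro k hk hks
      simp only [Finset.mem_range] at hk
      simp only [hs, Finset.mem_insert, Finset.mem_singleton, not_or] at hks
      exact Fzero k (by omega) (by omega) (by omega)
    rw [← Finset.sum_subset hsub hz]
    rw [hs, Finset.sum_insert (by simp only [Finset.mem_insert, Finset.mem_singleton, not_or]; omega), Finset.sum_insert (by simp only [Finset.mem_insert, Finset.mem_singleton, not_or]; omega),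
      Finset.sum_singleton]
    have f2 : F iv = -2 * (-1 : ℚ) ^ (iv + 1 + 1) := by
      show (if iv = iv then (if iv = n - 1 then -1 else -2)
        else if iv + 1 = iv ∨ iv + 1 = iv then -1
        else if (iv = 0 ∧ iv = 2) ∨ (iv = 2 ∧ iv = 0) then (-1:ℚ)
        else 0) * (if iv = 0 then -2 else if iv = 1 then 0
          else (-1 : ℚ) ^ ((iv + 1) + 1)) = _
      rw [if_pos rfl, if_neg hl, if_neg (by omega), if_neg (by omega)]
    have f3 : F (iv + 1) = -1 * (-1 : ℚ) ^ (iv + 1 + 1 + 1) := by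
      show (if iv = iv + 1 then (if iv = n - 1 then -1 else -2)
        else if iv + 1 = iv + 1 ∨ iv + 1 + 1 = iv then -1
        else if (iv = 0 ∧ iv + 1 = 2) ∨ (iv = 2 ∧ iv + 1 = 0) then (-1:ℚ)
        else 0) * (if iv + 1 = 0 then -2 else if iv + 1 = 1 then 0
          else (-1 : ℚ) ^ ((iv + 1 + 1) + 1)) = _
      rw [if_neg (by omega), if_pos (by omega), if_neg (by omega), if_neg (by omega)]
    rw [f1, f2, f3, pow_succ, pow_succ]
    ring
end
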